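/- arXiv:1512.08548 — 10 statements merged into one kernel-verified Lean document; each statement's English description precedes it below -/
import Mathlib

section
/- Let 0<q<1 and let α be a real number with 2α≤1. Then the function f_{α,1}(x;q) = Γ_q(x+1)·exp(−Li₂(1−q^x)/log q) / ((1−q^x)/(1−q))^{x+1−α} is logarithmically completely monotonic on (0,∞); that is, for every integer n≥1 and every x>0, (−1)^n (log f_{α,1}(·;q))^{(n)}(x) ≥ 0. -/
/-- The `q`-gamma function for `0 < q < 1`:
`Γ_q(x) = (1−q)^(1−x) ∏_{j=0}^∞ (1−q^(j+1))/(1−q^(j+x))`. -/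
noncomputable def qGamma (q x : ℝ) : ℝ :=
  (1 - q) ^ (1 - x) * ∏' j : ℕ, (1 - q ^ (j + 1)) / (1 - q ^ ((j : ℝ) + x))

/-- The dilogarithm `Li₂(z) = −∫₀^z log(1−t)/t dt`. -/
noncomputable def dilog (z : ℝ) : ℝ := -∫ t in (0:ℝ)..z, Real.log (1 - t) / t

/-- The function `f_{α,β}(x;q) = Γ_q(x+β)·exp(−Li₂(1−q^x)/log q) / ((1−q^x)/(1−q))^(x+β−α)`. -/
noncomputable def qf (α β q x : ℝ) : ℝ :=
  qGamma q (x + β) * Real.exp (-dilog (1 - q ^ x) / Real.log q) /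
    ((1 - q ^ x) / (1 - q)) ^ (x + β - α)

/-!
On `(0, ∞)` the derivative of `log f_{α,1}(·;q)` is a Dirichlet series
`-∑ b_k e^{-(k+1) L x}` in `q^x = e^{-L x}`, `L = log (1/q)`, with
`b_k = L q^{k+1}/(1 - q^{k+1}) + L (1 - α) - 1/(k+1)`. Indeed, expanding the logarithms of the
factors of `Γ_q` in powers of `q` and summing first over the factors writes `log Γ_q(y)` as such
a series in `y`; the dilogarithm term cancels the part of the derivative of
`(x + 1 - α) log ((1 - q^x)/(1 - q))` proportional to `x`, and the rest expands in powers of `q^x`.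
For `2α ≤ 1` each `b_k` is nonnegative, by the elementary inequality `(2 + u) e^{-u} ≥ 2 - u`,
and a Dirichlet series with nonnegative coefficients and exponents is completely monotonic.
-/

open Real Set Filter Topology MeasureTheory

noncomputable section

def dirichletSeries (a c : ℕ → ℝ) (y : ℝ) : ℝ := ∑' k, a k * exp (-(c k * y))

section DirichletSeries

variable {a c : ℕ → ℝ}

theorem dirichletSeries_nonneg (ha : ∀ k, 0 ≤ a k) (y : ℝ) : 0 ≤ dirichletSeries a c y :=
  tsum_nonneg fun k => mul_nonneg (ha k) (exp_pos _).le

theorem hasDerivAt_dirichletSeries (ha : ∀ k, 0 ≤ a k) (hc : ∀ k, 0 ≤ c k)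
    (hs : ∀ y, 0 < y → Summable fun k => a k * exp (-(c k * y)))
    (hs' : ∀ y, 0 < y → Summable fun k => a k * c k * exp (-(c k * y))) {x : ℝ} (hx : 0 < x) :
    HasDerivAt (dirichletSeries a c) (-dirichletSeries (fun k => a k * c k) c x) x := by
  have hderiv (k : ℕ) (y : ℝ) : HasDerivAt (fun y => a k * exp (-(c k * y)))
      (-(a k * c k * exp (-(c k * y)))) y := by
    have h : HasDerivAt (fun y => -(c k * y)) (-c k) y := by
      simpa using ((hasDerivAt_id y).const_mul (c k)).fun_neg
    exact (h.exp.const_mul (a k)).congr_deriv (by ring)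
  have hbound (k : ℕ) (y : ℝ) (hy : y ∈ Ioi (x / 2)) :
      ‖-(a k * c k * exp (-(c k * y)))‖ ≤ a k * c k * exp (-(c k * (x / 2))) := by
    rw [norm_neg, Real.norm_of_nonneg (mul_nonneg (mul_nonneg (ha k) (hc k)) (exp_pos _).le)]
    gcongr
    · exact mul_nonneg (ha k) (hc k)
    · exact hc k
    · exact le_of_lt hy
  unfold dirichletSeries
  rw [← tsum_neg]
  exact hasDerivAt_tsum_of_isPreconnected (hs' _ (half_pos hx)) isOpen_Ioi isPreconnected_Ioi
    (fun k y _ => hderiv k y) hbound (half_lt_self hx) (hs x hx) (half_lt_self hx)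

theorem iteratedDeriv_dirichletSeries (ha : ∀ k, 0 ≤ a k) (hc : ∀ k, 0 ≤ c k)
    (hs : ∀ m y, 0 < y → Summable fun k => a k * c k ^ m * exp (-(c k * y))) (m : ℕ)
    {x : ℝ} (hx : 0 < x) :
    iteratedDeriv m (dirichletSeries a c) x =
      (-1) ^ m * dirichletSeries (fun k => a k * c k ^ m) c x := by
  induction m generalizing x with
  | zero => simp
  | succ m ih =>
    have hev : iteratedDeriv m (dirichletSeries a c) =ᶠ[𝓝 x]
        fun y => (-1) ^ m * dirichletSeries (fun k => a k * c k ^ m) c y :=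
      eventually_of_mem (Ioi_mem_nhds hx) fun y hy => ih hy
    have hD := hasDerivAt_dirichletSeries (fun k => mul_nonneg (ha k) (pow_nonneg (hc k) m)) hc
      (hs m) (fun y hy => by simpa only [pow_succ, mul_assoc] using hs (m + 1) y hy) hx
    rw [iteratedDeriv_succ, hev.deriv_eq, (hD.const_mul _).deriv]
    simp only [pow_succ, mul_assoc]
    ring

theorem summable_mul_pow_mul_exp_neg_succ_mul {A L y : ℝ} (ha : ∀ k, 0 ≤ a k)
    (hA : ∀ k, a k ≤ A) (hL : 0 < L) (hy : 0 < y) (m : ℕ) :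
    Summable fun k : ℕ => a k * ((k + 1) * L) ^ m * exp (-((k + 1) * L * y)) := by
  set ρ := exp (-(L * y)) with hρ_def
  have hρ : ‖ρ‖ < 1 := by
    rw [Real.norm_of_nonneg (exp_pos _).le, exp_lt_one_iff]
    exact neg_neg_of_pos (mul_pos hL hy)
  have hgeom : Summable fun k : ℕ => ((k + 1 : ℕ) : ℝ) ^ m * ρ ^ (k + 1) :=
    (summable_nat_add_iff (f := fun n : ℕ => (n : ℝ) ^ m * ρ ^ n) 1).mpr
      (summable_pow_mul_geometric_of_norm_lt_one m hρ)
  have hexp (k : ℕ) : exp (-((k + 1) * L * y)) = ρ ^ (k + 1) := by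
    rw [hρ_def, ← exp_nat_mul]; push_cast; ring_nf
  refine .of_nonneg_of_le (fun k => ?_) (fun k => ?_) (hgeom.mul_left (A * L ^ m))
  · have := ha k
    positivity
  · rw [hexp, mul_pow]
    push_cast
    calc a k * ((k + 1) ^ m * L ^ m) * ρ ^ (k + 1)
        ≤ A * ((k + 1) ^ m * L ^ m) * ρ ^ (k + 1) := by gcongr; exact hA k
      _ = A * L ^ m * ((k + 1) ^ m * ρ ^ (k + 1)) := by ring

end DirichletSeries

theorem two_sub_le_two_add_mul_exp_neg {u : ℝ} (hu : 0 ≤ u) : 2 - u ≤ (2 + u) * exp (-u) := by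
  have hderiv (v : ℝ) : HasDerivAt (fun w => (2 + w) * exp (-w) + w)
      (1 - (1 + v) * exp (-v)) v := by
    have h := (((hasDerivAt_id v).const_add 2).mul (hasDerivAt_neg v).exp).add (hasDerivAt_id v)
    exact h.congr_deriv (by simp only [id]; ring)
  have hmono : MonotoneOn (fun w => (2 + w) * exp (-w) + w) (Ici 0) := by
    refine monotoneOn_of_deriv_nonneg (convex_Ici 0) (by fun_prop)
      (fun v _ => (hderiv v).differentiableAt.differentiableWithinAt) fun v _ => ?_
    rw [(hderiv v).deriv, sub_nonneg, exp_neg, ← div_eq_mul_inv, div_le_one (exp_pos v)]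
    linarith [add_one_le_exp v]
  simpa using hmono self_mem_Ici hu hu

theorem intervalIntegrable_log_one_sub_div {z : ℝ} (hz0 : 0 < z) (hz1 : z < 1) :
    IntervalIntegrable (fun t => log (1 - t) / t) volume 0 z := by
  have hmeas : Measurable fun t : ℝ => log (1 - t) / t := by fun_prop
  refine (intervalIntegrable_const (c := 1 / (1 - z))).mono_fun' hmeas.aestronglyMeasurable ?_
  rw [uIoc_of_le hz0.le]
  filter_upwards [ae_restrict_mem measurableSet_Ioc] with t ⟨ht0, htz⟩
  have h1t : 0 < 1 - t := by linarith
  have hlog : -log (1 - t) ≤ t / (1 - t) := by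
    have := one_sub_inv_le_log_of_pos h1t
    have : 1 - (1 - t)⁻¹ = -(t / (1 - t)) := by field_simp; ring
    linarith
  rw [norm_div, Real.norm_of_nonpos (log_nonpos h1t.le (by linarith)), Real.norm_of_nonneg ht0.le,
    div_le_iff₀ ht0]
  calc -log (1 - t) ≤ t / (1 - t) := hlog
    _ ≤ t / (1 - z) := div_le_div_of_nonneg_left ht0.le (by linarith) (by linarith)
    _ = 1 / (1 - z) * t := by ring

theorem hasDerivAt_dilog {z : ℝ} (hz0 : 0 < z) (hz1 : z < 1) :
    HasDerivAt dilog (-(log (1 - z) / z)) z := by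
  have hmeas : Measurable fun t : ℝ => log (1 - t) / t := by fun_prop
  have hsub : ContinuousAt (fun t : ℝ => 1 - t) z := by fun_prop
  have hcont : ContinuousAt (fun t => log (1 - t) / t) z :=
    (hsub.log (by linarith)).div continuousAt_id hz0.ne'
  exact (intervalIntegral.integral_hasDerivAt_right (intervalIntegrable_log_one_sub_div hz0 hz1)
    hmeas.stronglyMeasurable.stronglyMeasurableAtFilter hcont).neg

def qRate (q : ℝ) (k : ℕ) : ℝ := (k + 1) * -log q

def logQGammaCoeff (q : ℝ) (k : ℕ) : ℝ := 1 / ((k + 1) * (1 - q ^ (k + 1)))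

def qfCoeff (q α : ℝ) (k : ℕ) : ℝ :=
  -log q * (q ^ (k + 1) / (1 - q ^ (k + 1)) + (1 - α)) - 1 / (k + 1)

section QSeries

variable {q : ℝ}

theorem qRate_nonneg (hq0 : 0 ≤ q) (hq1 : q ≤ 1) (k : ℕ) : 0 ≤ qRate q k :=
  mul_nonneg (by positivity) (neg_nonneg.mpr (log_nonpos hq0 hq1))

theorem exp_neg_qRate_mul (hq0 : 0 < q) (k : ℕ) (y : ℝ) :
    exp (-(qRate q k * y)) = (q ^ y) ^ (k + 1) := by
  rw [rpow_def_of_pos hq0, ← exp_nat_mul, qRate]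
  push_cast
  ring_nf

theorem summable_mul_qRate_pow_mul_exp {a : ℕ → ℝ} {A : ℝ} (hq0 : 0 < q) (hq1 : q < 1)
    (ha : ∀ k, 0 ≤ a k) (hA : ∀ k, a k ≤ A) (m : ℕ) {y : ℝ} (hy : 0 < y) :
    Summable fun k => a k * qRate q k ^ m * exp (-(qRate q k * y)) :=
  summable_mul_pow_mul_exp_neg_succ_mul ha hA (neg_pos.mpr (log_neg hq0 hq1)) hy m

theorem one_sub_le_one_sub_pow_succ (hq0 : 0 ≤ q) (hq1 : q ≤ 1) (k : ℕ) :
    1 - q ≤ 1 - q ^ (k + 1) :=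
  sub_le_sub_left (pow_le_of_le_one hq0 hq1 k.succ_ne_zero) 1

theorem logQGammaCoeff_nonneg (hq0 : 0 ≤ q) (hq1 : q < 1) (k : ℕ) :
    0 ≤ logQGammaCoeff q k := by
  have := one_sub_le_one_sub_pow_succ hq0 hq1.le k
  have : 0 < 1 - q ^ (k + 1) := by linarith
  unfold logQGammaCoeff
  positivity

theorem logQGammaCoeff_le (hq0 : 0 ≤ q) (hq1 : q < 1) (k : ℕ) :
    logQGammaCoeff q k ≤ 1 / (1 - q) := by
  have hle := one_sub_le_one_sub_pow_succ hq0 hq1.le k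
  apply one_div_le_one_div_of_le (by linarith)
  nlinarith [(k.cast_nonneg : (0 : ℝ) ≤ k)]

theorem summable_logQGammaCoeff (hq0 : 0 < q) (hq1 : q < 1) (m : ℕ) {y : ℝ} (hy : 0 < y) :
    Summable fun k => logQGammaCoeff q k * qRate q k ^ m * exp (-(qRate q k * y)) :=
  summable_mul_qRate_pow_mul_exp hq0 hq1 (logQGammaCoeff_nonneg hq0.le hq1)
    (logQGammaCoeff_le hq0.le hq1) m hy

theorem qfCoeff_nonneg {α : ℝ} (hq0 : 0 < q) (hq1 : q < 1) (hα : 2 * α ≤ 1) (k : ℕ) :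
    0 ≤ qfCoeff q α k := by
  set u := qRate q k
  set t := q ^ (k + 1)
  have hu : 0 < u := mul_pos (by positivity) (neg_pos.mpr (log_neg hq0 hq1))
  have ht : t = exp (-u) := by rw [← mul_one u, exp_neg_qRate_mul hq0, rpow_one]
  have ht1 : 0 < 1 - t := by
    have := one_sub_le_one_sub_pow_succ hq0.le hq1.le k; linarith
  have hkey : 2 - u ≤ (2 + u) * t := ht ▸ two_sub_le_two_add_mul_exp_neg hu.le
  have hk : (0 : ℝ) < k + 1 := by positivity
  -- `u t / (1 - t) ≥ 1 - u / 2` is `hkey` in disguise, and `u (1 - α) ≥ u / 2`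
  have h : 1 ≤ u * t / (1 - t) + u * (1 - α) := by
    have : (2 - u) / 2 ≤ u * t / (1 - t) := by
      rw [div_le_div_iff₀ two_pos ht1]; nlinarith
    nlinarith
  have hu_def : u = (k + 1) * -log q := rfl
  rw [qfCoeff, sub_nonneg, div_le_iff₀ hk]
  calc 1 ≤ u * t / (1 - t) + u * (1 - α) := h
    _ = -log q * (t / (1 - t) + (1 - α)) * (k + 1) := by rw [hu_def]; ring

theorem qfCoeff_le {α : ℝ} (hq0 : 0 ≤ q) (hq1 : q < 1) (k : ℕ) :
    qfCoeff q α k ≤ -log q * (1 / (1 - q) + (1 - α)) := by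
  have hle := one_sub_le_one_sub_pow_succ hq0 hq1.le k
  have hL : 0 ≤ -log q := neg_nonneg.mpr (log_nonpos hq0 hq1.le)
  have hfrac : q ^ (k + 1) / (1 - q ^ (k + 1)) ≤ 1 / (1 - q) :=
    div_le_div₀ zero_le_one (pow_le_one₀ hq0 hq1.le) (by linarith) hle
  have : (0 : ℝ) ≤ 1 / (k + 1) := by positivity
  rw [qfCoeff]
  nlinarith [mul_le_mul_of_nonneg_left hfrac hL]

theorem hasSum_neg_log_one_sub_rpow (hq0 : 0 < q) (hq1 : q < 1) {y : ℝ} (hy : 0 < y) :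
    HasSum (fun j : ℕ => -log (1 - q ^ ((j : ℝ) + y)))
      (dirichletSeries (logQGammaCoeff q) (qRate q) y) := by
  set f : ℕ × ℕ → ℝ := fun p => (q ^ ((p.2 : ℝ) + y)) ^ (p.1 + 1) / ((p.1 : ℝ) + 1)
    with hf_def
  have hrow (j : ℕ) : HasSum (fun k => f (k, j)) (-log (1 - q ^ ((j : ℝ) + y))) := by
    refine hasSum_pow_div_log_of_abs_lt_one (x := q ^ ((j : ℝ) + y)) ?_
    rw [abs_of_pos (rpow_pos_of_pos hq0 _)]
    exact rpow_lt_one hq0.le hq1 (by positivity)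
  have hcol (k : ℕ) : HasSum (fun j => f (k, j))
      (logQGammaCoeff q k * exp (-(qRate q k * y))) := by
    have hgeom := (hasSum_geometric_of_lt_one (pow_pos hq0 (k + 1)).le
      (pow_lt_one₀ hq0.le hq1 k.succ_ne_zero)).mul_right ((q ^ y) ^ (k + 1) / (k + 1))
    have hterm : (fun j => f (k, j)) =
        fun j : ℕ => (q ^ (k + 1)) ^ j * ((q ^ y) ^ (k + 1) / (k + 1)) := by
      funext j
      simp only [hf_def, rpow_add hq0, rpow_natCast]
      ring
    have hval : logQGammaCoeff q k * exp (-(qRate q k * y)) =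
        (1 - q ^ (k + 1))⁻¹ * ((q ^ y) ^ (k + 1) / (k + 1)) := by
      rw [exp_neg_qRate_mul hq0, logQGammaCoeff]
      field_simp
    rwa [hterm, hval]
  have hf : Summable f := by
    refine (summable_prod_of_nonneg fun p => by positivity).mpr
      ⟨fun k => (hcol k).summable, ?_⟩
    simp only [(hcol _).tsum_eq]
    simpa using summable_logQGammaCoeff hq0 hq1 0 hy
  have htot : dirichletSeries (logQGammaCoeff q) (qRate q) y = ∑' p, f p :=
    (hf.hasSum.prod_fiberwise hcol).tsum_eq
  rw [htot, ← (Equiv.prodComm ℕ ℕ).tsum_eq]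
  exact hf.prod_symm.hasSum.prod_fiberwise hrow

theorem qGamma_eq_rpow_mul_exp (hq0 : 0 < q) (hq1 : q < 1) {y : ℝ} (hy : 0 < y) :
    qGamma q y = (1 - q) ^ (1 - y) * exp (dirichletSeries (logQGammaCoeff q) (qRate q) y -
      dirichletSeries (logQGammaCoeff q) (qRate q) 1) := by
  have h := ((hasSum_neg_log_one_sub_rpow hq0 hq1 hy).sub
    (hasSum_neg_log_one_sub_rpow hq0 hq1 one_pos)).rexp
  rw [qGamma, ← h.tprod_eq]
  congr 1
  refine tprod_congr fun j => ?_
  have hy' : 0 < 1 - q ^ ((j : ℝ) + y) := sub_pos.mpr (rpow_lt_one hq0.le hq1 (by positivity))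
  have h1 : 0 < 1 - q ^ (j + 1) := sub_pos.mpr (pow_lt_one₀ hq0.le hq1 j.succ_ne_zero)
  simp only [Function.comp_apply]
  rw [← Nat.cast_add_one, rpow_natCast, neg_sub_neg, exp_sub, exp_log hy', exp_log h1]

theorem hasSum_qfCoeff_mul_exp (hq0 : 0 < q) (hq1 : q < 1) {α x : ℝ} (hx : 0 < x) :
    HasSum (fun k => qfCoeff q α k * exp (-(qRate q k * x)))
      (dirichletSeries (fun k => logQGammaCoeff q k * qRate q k) (qRate q) (x + 1) +
        -log q * (1 - α) * (q ^ x / (1 - q ^ x)) + log (1 - q ^ x)) := by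
  set r := q ^ x with hr
  have hr0 : 0 < r := rpow_pos_of_pos hq0 x
  have hr1 : r < 1 := rpow_lt_one hq0.le hq1 hx
  have hS : HasSum (fun k => logQGammaCoeff q k * qRate q k * exp (-(qRate q k * (x + 1))))
      (dirichletSeries (fun k => logQGammaCoeff q k * qRate q k) (qRate q) (x + 1)) := by
    have := (summable_logQGammaCoeff hq0 hq1 1 (by linarith : 0 < x + 1)).hasSum
    simp only [pow_one] at this
    exact this
  have hgeom : HasSum (fun k : ℕ => r ^ (k + 1)) (r / (1 - r)) := by
    simpa only [div_eq_mul_inv, ← pow_succ'] using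
      (hasSum_geometric_of_lt_one hr0.le hr1).mul_left r
  have hlog : HasSum (fun k : ℕ => r ^ (k + 1) / (k + 1)) (-log (1 - r)) :=
    hasSum_pow_div_log_of_abs_lt_one (by rwa [abs_of_pos hr0])
  convert (hS.add (hgeom.mul_left (-log q * (1 - α)))).add hlog.neg using 1
  · funext k
    have hk : (k : ℝ) + 1 ≠ 0 := by positivity
    have hqk : 1 - q ^ (k + 1) ≠ 0 := (sub_pos.mpr (pow_lt_one₀ hq0.le hq1 k.succ_ne_zero)).ne'
    rw [exp_neg_qRate_mul hq0, exp_neg_qRate_mul hq0, rpow_add_one hq0.ne', ← hr, qfCoeff,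
      logQGammaCoeff, qRate]
    field_simp
    ring
  · rw [neg_neg]

theorem log_qf_one_eq (hq0 : 0 < q) (hq1 : q < 1) {α t : ℝ} (ht : 0 < t) :
    log (qf α 1 q t) = -t * log (1 - q) + (dirichletSeries (logQGammaCoeff q) (qRate q) (t + 1) -
      dirichletSeries (logQGammaCoeff q) (qRate q) 1) + -dilog (1 - q ^ t) / log q -
      (t + 1 - α) * log ((1 - q ^ t) / (1 - q)) := by
  have hq : 0 < 1 - q := sub_pos.mpr hq1
  have hr : 0 < (1 - q ^ t) / (1 - q) := div_pos (sub_pos.mpr (rpow_lt_one hq0.le hq1 ht)) hq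
  rw [qf, qGamma_eq_rpow_mul_exp hq0 hq1 (by linarith), log_div (by positivity) (by positivity),
    log_mul (by positivity) (exp_pos _).ne', log_mul (by positivity) (exp_pos _).ne', log_exp,
    log_exp, log_rpow hq, log_rpow hr]
  ring

theorem hasDerivAt_log_qf (hq0 : 0 < q) (hq1 : q < 1) {α x : ℝ} (hx : 0 < x) :
    HasDerivAt (fun t => log (qf α 1 q t)) (-dirichletSeries (qfCoeff q α) (qRate q) x) x := by
  have hr0 : 0 < q ^ x := rpow_pos_of_pos hq0 x
  have hr1 : q ^ x < 1 := rpow_lt_one hq0.le hq1 hx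
  have hS := (hasDerivAt_dirichletSeries (logQGammaCoeff_nonneg hq0.le hq1)
    (qRate_nonneg hq0.le hq1.le) (fun y hy => by simpa using summable_logQGammaCoeff hq0 hq1 0 hy)
    (fun y hy => by simpa using summable_logQGammaCoeff hq0 hq1 1 hy)
    (by linarith : 0 < x + 1)).comp_add_const x 1
  have hpow : HasDerivAt (fun t => q ^ t) (q ^ x * log q) x :=
    (hasStrictDerivAt_const_rpow hq0 x).hasDerivAt
  have hdilog := (hasDerivAt_dilog (sub_pos.mpr hr1) (by linarith)).comp x (hpow.const_sub 1)
  have hlog := ((hpow.const_sub 1).div_const (1 - q)).log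
    (div_pos (sub_pos.mpr hr1) (sub_pos.mpr hq1)).ne'
  have hlin : HasDerivAt (fun t => t + 1 - α) 1 x := ((hasDerivAt_id x).add_const 1).sub_const α
  have h := ((((hasDerivAt_neg x).mul_const (log (1 - q))).add
    (hS.sub_const (dirichletSeries (logQGammaCoeff q) (qRate q) 1))).add
    (hdilog.neg.div_const (log q))).sub (hlin.mul hlog)
  refine (h.congr_deriv ?_).congr_of_eventuallyEq
    (eventually_of_mem (Ioi_mem_nhds hx) fun t ht => log_qf_one_eq hq0 hq1 ht)
  rw [show dirichletSeries (qfCoeff q α) (qRate q) x = _ from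
    (hasSum_qfCoeff_mul_exp hq0 hq1 hx).tsum_eq, sub_sub_cancel, log_rpow hq0]
  have hr : 1 - q ^ x ≠ 0 := (sub_pos.mpr hr1).ne'
  have hq : 1 - q ≠ 0 := (sub_pos.mpr hq1).ne'
  rw [log_div hr hq]
  field_simp
  ring

end QSeries

/-- If `0 < q < 1` and `2α ≤ 1`, then `f_{α,1}(·;q)` is logarithmically completely
monotonic on `(0,∞)`: for every `n ≥ 1` and `x > 0`,
`(−1)^n (log f_{α,1}(·;q))^{(n)}(x) ≥ 0`. -/
theorem logCompletelyMonotonic_qf_of_two_alpha_le_one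
    (q α : ℝ) (hq0 : 0 < q) (hq1 : q < 1) (hα : 2 * α ≤ 1) :
    ∀ n : ℕ, 1 ≤ n → ∀ x : ℝ, 0 < x →
      0 ≤ (-1 : ℝ) ^ n * iteratedDeriv n (fun t => Real.log (qf α 1 q t)) x := by
  intro n hn x hx
  obtain ⟨m, rfl⟩ := Nat.exists_eq_add_of_le' hn
  have hb := qfCoeff_nonneg hq0 hq1 hα
  have hc := qRate_nonneg hq0.le hq1.le
  have hderiv : deriv (fun t => log (qf α 1 q t)) =ᶠ[𝓝 x]
      -dirichletSeries (qfCoeff q α) (qRate q) :=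
    eventually_of_mem (Ioi_mem_nhds hx) fun y hy => (hasDerivAt_log_qf hq0 hq1 hy).deriv
  rw [iteratedDeriv_succ', hderiv.iteratedDeriv_eq, iteratedDeriv_neg,
    iteratedDeriv_dirichletSeries hb hc
      (fun m y hy => summable_mul_qRate_pow_mul_exp hq0 hq1 hb (qfCoeff_le hq0.le hq1) m hy) m hx]
  set D := dirichletSeries (fun k => qfCoeff q α k * qRate q k ^ m) (qRate q) x
  have hD : 0 ≤ D := dirichletSeries_nonneg (fun k => mul_nonneg (hb k) (pow_nonneg (hc k) m)) x
  calc (0 : ℝ) ≤ ((-1) ^ m) ^ 2 * D := mul_nonneg (sq_nonneg _) hD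
    _ = (-1) ^ (m + 1) * -((-1) ^ m * D) := by ring

end
end

section
/- Let 0<q<1 and let α be a real number. If the reciprocal function 1/f_{α,1}(x;q), where f_{α,1}(x;q) = Γ_q(x+1)·exp(−Li₂(1−q^x)/log q) / ((1−q^x)/(1−q))^{x+1−α}, is logarithmically completely monotonic on (0,∞), then α≥1. -/
open Real Filter Set Topology

lemma neg_log_one_sub_le {t : ℝ} (h0 : 0 ≤ t) (h1 : t < 1) :
    -Real.log (1 - t) ≤ t / (1 - t) := by
  have h : (0:ℝ) < 1 - t := by linarith
  rw [← Real.log_inv]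
  have h2 := Real.log_le_sub_one_of_pos (show (0:ℝ) < (1-t)⁻¹ by positivity)
  have h3 : (1-t)⁻¹ - 1 = t / (1-t) := by field_simp; ring
  linarith

lemma summable_neg_log_one_sub {q : ℝ} (hq0 : 0 < q) (hq1 : q < 1) {s : ℝ} (hs : 0 < s) :
    Summable (fun j : ℕ => -Real.log (1 - q ^ ((j:ℝ) + s))) := by
  have hqs1 : q ^ s < 1 := Real.rpow_lt_one hq0.le hq1 hs
  have hqs0 : 0 < q ^ s := Real.rpow_pos_of_pos hq0 s
  have key : ∀ j : ℕ, q ^ ((j:ℝ) + s) = q ^ j * q ^ s := by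
    intro j
    rw [Real.rpow_add hq0, Real.rpow_natCast]
  have hfacts : ∀ j : ℕ, 0 < q ^ ((j:ℝ)+s) ∧ q ^ ((j:ℝ)+s) ≤ q ^ s := by
    intro j
    refine ⟨Real.rpow_pos_of_pos hq0 _, ?_⟩
    rw [key]
    have hpj : (0:ℝ) < q ^ j := pow_pos hq0 j
    have hpj1 : q ^ j ≤ 1 := pow_le_one₀ hq0.le hq1.le
    nlinarith
  refine Summable.of_nonneg_of_le (fun j => ?_) (fun j => ?_)
    ((summable_geometric_of_lt_one hq0.le hq1).mul_right (q ^ s / (1 - q ^ s)))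
  · obtain ⟨ht0, hts⟩ := hfacts j
    have ht1 : q ^ ((j:ℝ)+s) < 1 := lt_of_le_of_lt hts hqs1
    simp only [neg_nonneg]
    exact Real.log_nonpos (by linarith) (by linarith)
  · obtain ⟨ht0, hts⟩ := hfacts j
    have ht1 : q ^ ((j:ℝ)+s) < 1 := lt_of_le_of_lt hts hqs1
    calc -Real.log (1 - q^((j:ℝ)+s)) ≤ q^((j:ℝ)+s) / (1 - q^((j:ℝ)+s)) :=
          neg_log_one_sub_le ht0.le ht1
      _ ≤ q^((j:ℝ)+s) / (1 - q^s) := by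
          apply div_le_div₀ (le_of_lt ht0) le_rfl (by linarith) (by linarith)
      _ = q^j * (q^s/(1-q^s)) := by rw [key, mul_div_assoc]

lemma summable_log_one_sub {q : ℝ} (hq0 : 0 < q) (hq1 : q < 1) {s : ℝ} (hs : 0 < s) :
    Summable (fun j : ℕ => Real.log (1 - q ^ ((j:ℝ) + s))) := by
  simpa using (summable_neg_log_one_sub hq0 hq1 hs).neg

lemma hasProd_exp_log {f : ℕ → ℝ} (hpos : ∀ n, 0 < f n)
    (hs : Summable fun n => Real.log (f n)) :
    HasProd f (Real.exp (∑' n, Real.log (f n))) := by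
  refine (hs.hasSum.rexp).congr_fun fun n => ?_
  simp [Function.comp, Real.exp_log (hpos n)]

lemma abs_dilog_le {z : ℝ} (h0 : 0 ≤ z) (h1 : z < 1) : |dilog z| ≤ z / (1 - z) := by
  have hz : (0:ℝ) < 1 - z := by linarith
  have hb : ∀ t ∈ Set.uIoc (0:ℝ) z, ‖Real.log (1 - t) / t‖ ≤ 1 / (1 - z) := by
    intro t ht
    rw [Set.uIoc_of_le h0] at ht
    obtain ⟨ht0, htz⟩ := ht
    have h1t : (0:ℝ) < 1 - t := by linarith
    have hlog : Real.log (1 - t) ≤ 0 := Real.log_nonpos (by linarith) (by linarith)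
    rw [Real.norm_eq_abs, abs_div, abs_of_pos ht0, abs_of_nonpos hlog]
    have h2 : -Real.log (1-t) ≤ t / (1-z) := by
      refine le_trans (neg_log_one_sub_le ht0.le (by linarith)) ?_
      apply div_le_div₀ (le_of_lt ht0) le_rfl hz (by linarith)
    rw [div_le_div_iff₀ ht0 hz]
    calc -Real.log (1-t) * (1-z) ≤ (t/(1-z)) * (1-z) := by nlinarith
      _ = t := by field_simp
      _ = 1 * t := (one_mul t).symm
  have hI := intervalIntegral.norm_integral_le_of_norm_le_const hb
  rw [dilog, abs_neg, ← Real.norm_eq_abs]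
  calc ‖∫ t in (0:ℝ)..z, Real.log (1 - t) / t‖ ≤ 1/(1-z) * |z - 0| := hI
    _ = z / (1-z) := by rw [sub_zero, abs_of_nonneg h0]; ring

/-- If `0 < q < 1` and `1/f_{α,1}(·;q)` is logarithmically completely monotonic on
`(0,∞)` (i.e. `−log f_{α,1}(·;q)` is infinitely differentiable there and
`(−1)^n (−log f_{α,1}(·;q))^{(n)}(x) ≥ 0` for all `n ≥ 1`, `x > 0`), then `α ≥ 1`. -/
theorem one_le_alpha_of_logCompletelyMonotonic_inv_qf
    (q α : ℝ) (hq0 : 0 < q) (hq1 : q < 1)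
    (hsmooth : ContDiffOn ℝ (⊤ : ℕ∞) (fun t => -Real.log (qf α 1 q t)) (Set.Ioi 0))
    (hmono : ∀ n : ℕ, 1 ≤ n → ∀ x : ℝ, 0 < x →
      0 ≤ (-1 : ℝ) ^ n * iteratedDeriv n (fun t => -Real.log (qf α 1 q t)) x) :
    1 ≤ α := by
  by_contra hcon
  push_neg at hcon
  have hα : 0 < 1 - α := by linarith
  have hq' : (0:ℝ) < 1 - q := by linarith
  have hlq : Real.log q < 0 := Real.log_neg hq0 hq1
  -- monotonicity of `log (qf α 1 q ·)`
  have hanti : AntitoneOn (fun t => -Real.log (qf α 1 q t)) (Set.Ioi 0) := by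
    apply antitoneOn_of_deriv_nonpos (convex_Ioi 0) hsmooth.continuousOn
    · rw [interior_Ioi]
      exact hsmooth.differentiableOn (by simp)
    · intro x hx
      rw [interior_Ioi] at hx
      have h1 := hmono 1 le_rfl x hx
      rw [iteratedDeriv_one] at h1
      simp only [pow_one, neg_one_mul] at h1
      linarith
  have hub : ∀ᶠ x in 𝓝[>](0:ℝ), Real.log (qf α 1 q x) ≤ Real.log (qf α 1 q 1) := by
    filter_upwards [Ioo_mem_nhdsGT one_pos] with x hx
    have := hanti (Set.mem_Ioi.mpr hx.1) (Set.mem_Ioi.mpr one_pos) hx.2.le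
    simp only at this
    linarith
  -- summability facts
  have hsumden : ∀ x : ℝ, 0 < x →
      Summable (fun j : ℕ => Real.log (1 - q ^ ((j:ℝ) + (x+1)))) :=
    fun x hx => summable_log_one_sub hq0 hq1 (by linarith)
  have hsumnum : Summable (fun j : ℕ => Real.log (1 - q ^ (j+1))) := by
    refine (summable_log_one_sub hq0 hq1 (s := 1) one_pos).congr fun j => ?_
    rw [show ((j:ℝ) + 1) = ((j+1 : ℕ) : ℝ) by push_cast; ring, Real.rpow_natCast]
  set S0 : ℝ := ∑' j : ℕ, Real.log (1 - q^(j+1)) with hS0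
  have hnum : ∀ j : ℕ, 0 < 1 - q ^ (j+1) := fun j => by
    have : q ^ (j+1) < 1 := pow_lt_one₀ hq0.le hq1 (Nat.succ_ne_zero j)
    linarith
  have hden : ∀ x : ℝ, 0 < x → ∀ j : ℕ, 0 < 1 - q ^ ((j:ℝ) + (x+1)) := by
    intro x hx j
    have : q ^ ((j:ℝ)+(x+1)) < 1 := Real.rpow_lt_one hq0.le hq1 (by positivity)
    linarith
  -- the product formula
  have hProd : ∀ x : ℝ, 0 < x →
      (∏' j : ℕ, (1 - q ^ (j + 1)) / (1 - q ^ ((j : ℝ) + (x+1))))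
        = Real.exp (∑' j : ℕ,
            (Real.log (1 - q ^ (j+1)) - Real.log (1 - q ^ ((j:ℝ) + (x+1))))) := by
    intro x hx
    have hsl : Summable (fun j : ℕ =>
        Real.log ((1 - q^(j+1)) / (1 - q^((j:ℝ)+(x+1))))) := by
      refine ((hsumnum.sub (hsumden x hx))).congr fun j => ?_
      rw [Real.log_div (hnum j).ne' (hden x hx j).ne']
    have hp := hasProd_exp_log
      (f := fun j : ℕ => (1 - q^(j+1))/(1 - q^((j:ℝ)+(x+1))))
      (fun j => div_pos (hnum j) (hden x hx j)) hsl
    rw [hp.tprod_eq]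
    congr 1
    exact tsum_congr fun j => Real.log_div (hnum j).ne' (hden x hx j).ne'
  -- log formula
  have hlogqf : ∀ x : ℝ, 0 < x → Real.log (qf α 1 q x) =
      (1 - (x+1)) * Real.log (1-q)
      + (∑' j : ℕ, (Real.log (1 - q^(j+1)) - Real.log (1 - q^((j:ℝ)+(x+1)))))
      + (-dilog (1 - q^x) / Real.log q)
      - (x+1-α) * Real.log ((1 - q^x)/(1-q)) := by
    intro x hx
    have hqx1 : q ^ x < 1 := Real.rpow_lt_one hq0.le hq1 hx
    have hz : (0:ℝ) < 1 - q^x := by linarith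
    have hR : (0:ℝ) < (1 - q^x)/(1-q) := div_pos hz hq'
    rw [qf, qGamma, hProd x hx]
    rw [Real.log_div (by positivity) (by positivity),
      Real.log_mul (by positivity) (Real.exp_pos _).ne',
      Real.log_mul (by positivity) (Real.exp_pos _).ne',
      Real.log_rpow hq', Real.log_exp, Real.log_exp, Real.log_rpow hR]
  set K2 : ℝ := ((1-q)/q)/(-Real.log q) with hK2
  -- lower bound on (0,1)
  have hlb : ∀ x ∈ Set.Ioo (0:ℝ) 1,
      (S0 - K2 + (1-α)*Real.log (1-q)) + (1-α) * (-Real.log (1 - q^x))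
        ≤ Real.log (qf α 1 q x) := by
    intro x hx
    obtain ⟨hx0, hx1⟩ := hx
    have hqx1 : q^x < 1 := Real.rpow_lt_one hq0.le hq1 hx0
    have hqxq : q < q^x := by
      have := Real.rpow_lt_rpow_of_exponent_gt hq0 hq1 hx1
      rwa [Real.rpow_one] at this
    have hz : (0:ℝ) < 1 - q^x := by linarith
    have hz' : 1 - q^x < 1 - q := by linarith
    have hqx0 : (0:ℝ) < q ^ x := Real.rpow_pos_of_pos hq0 x
    rw [hlogqf x hx0]
    have ht1 : 0 ≤ (1-(x+1)) * Real.log (1-q) := by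
      have h : Real.log (1-q) ≤ 0 := Real.log_nonpos (by linarith) (by linarith)
      nlinarith
    have ht2 : S0 ≤ ∑' j : ℕ,
        (Real.log (1 - q^(j+1)) - Real.log (1 - q^((j:ℝ)+(x+1)))) := by
      refine Summable.tsum_le_tsum (fun j => ?_) hsumnum (hsumnum.sub (hsumden x hx0))
      have h1 : q ^ ((j:ℝ)+(x+1)) < 1 := Real.rpow_lt_one hq0.le hq1 (by positivity)
      have h2 : (0:ℝ) < q ^ ((j:ℝ)+(x+1)) := Real.rpow_pos_of_pos hq0 _
      have h3 : Real.log (1 - q ^ ((j:ℝ)+(x+1))) ≤ 0 :=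
        Real.log_nonpos (by linarith) (by linarith)
      linarith
    have ht3 : -K2 ≤ -dilog (1 - q^x) / Real.log q := by
      have habs : |dilog (1 - q^x)| ≤ (1-q)/q := by
        calc |dilog (1-q^x)| ≤ (1-q^x)/(1 - (1-q^x)) := abs_dilog_le hz.le (by linarith)
          _ = (1-q^x)/(q^x) := by rw [sub_sub_cancel]
          _ ≤ (1-q)/q := div_le_div₀ hq'.le hz'.le hq0 hqxq.le
      have hlq' : (0:ℝ) < -Real.log q := by linarith
      have heq : -dilog (1-q^x) / Real.log q = dilog (1-q^x) / (-Real.log q) := by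
        ring
      rw [heq, hK2, ← neg_div]
      exact (div_le_div_iff_of_pos_right hlq').mpr
        (by linarith [neg_abs_le (dilog (1-q^x))])
    have hlogRdiv : Real.log ((1-q^x)/(1-q))
        = Real.log (1-q^x) - Real.log (1-q) := Real.log_div hz.ne' hq'.ne'
    have hlogR' : Real.log (1-q^x) - Real.log (1-q) ≤ 0 := by
      rw [← hlogRdiv]
      exact Real.log_nonpos (by positivity) ((div_le_one hq').mpr hz'.le)
    have ht4 : (1-α)*Real.log (1-q) + (1-α)*(-Real.log (1-q^x))
        ≤ -((x+1-α) * Real.log ((1-q^x)/(1-q))) := by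
      rw [hlogRdiv]
      have hprod : 0 ≤ x * (-(Real.log (1-q^x) - Real.log (1-q))) :=
        mul_nonneg hx0.le (by linarith)
      nlinarith [hprod]
    linarith
  -- tendsto
  have htz : Tendsto (fun x : ℝ => 1 - q^x) (𝓝[>](0:ℝ)) (𝓝[>](0:ℝ)) := by
    rw [tendsto_nhdsWithin_iff]
    constructor
    · have hc : Continuous fun x : ℝ => 1 - q^x := by
        have hrw : (fun x : ℝ => q ^ x) = fun x => Real.exp (Real.log q * x) :=
          funext fun x => Real.rpow_def_of_pos hq0 x
        rw [show (fun x : ℝ => 1 - q^x) = fun x : ℝ => 1 - Real.exp (Real.log q * x) by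
          simp only [hrw]]
        continuity
      have := hc.tendsto 0
      simp only [Real.rpow_zero, sub_self] at this
      exact this.mono_left nhdsWithin_le_nhds
    · filter_upwards [self_mem_nhdsWithin] with x hx
      have : q^x < 1 := Real.rpow_lt_one hq0.le hq1 hx
      exact Set.mem_Ioi.mpr (by linarith)
  have hlogtend : Tendsto (fun x : ℝ => -Real.log (1 - q^x)) (𝓝[>](0:ℝ)) atTop :=
    tendsto_neg_atTop_iff.mpr (Real.tendsto_log_nhdsGT_zero.comp htz)
  have hBtend : Tendsto (fun x : ℝ =>
      (S0 - K2 + (1-α)*Real.log (1-q)) + (1-α) * (-Real.log (1-q^x)))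
      (𝓝[>](0:ℝ)) atTop :=
    tendsto_atTop_add_const_left _ _ (hlogtend.const_mul_atTop hα)
  have hftend : Tendsto (fun x => Real.log (qf α 1 q x)) (𝓝[>](0:ℝ)) atTop := by
    refine tendsto_atTop_mono' _ ?_ hBtend
    filter_upwards [Ioo_mem_nhdsGT one_pos] with x hx
    exact hlb x hx
  obtain ⟨x, h1, h2⟩ :=
    ((hftend.eventually (eventually_gt_atTop (Real.log (qf α 1 q 1)))).and hub).exists
  linarith
end

section
/- Let α be a real number and let y∈(0,1). Then y log y + (1−α)(1−y) log y + (1−y) = y · Σ_{k=2}^{∞} (log(1/y))^k/(k−1)! · (α − 1 + 1/k), where the series on the right converges. -/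
/-! With `t = log (1/y)` we have `y = exp (-t)`, so after multiplying by `1/y = exp t` the
left-hand side becomes `(α - 1) t (exp t - 1) + (exp t - 1 - t)`. Both brackets are tails of the
exponential series, and combining them termwise gives `t^(k+2)/(k+1)! · (α - 1 + 1/(k+2))`,
since `(k+2)! = (k+2)(k+1)!`. -/

open Nat Real

lemma hasSum_pow_div_factorial (t : ℝ) : HasSum (fun n : ℕ => t ^ n / n !) (exp t) := by
  rw [exp_eq_exp_ℝ]
  exact NormedSpace.expSeries_div_hasSum_exp t

lemma hasSum_pow_succ_div_factorial (t : ℝ) :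
    HasSum (fun k : ℕ => t ^ (k + 1) / (k + 1)!) (exp t - 1) := by
  simpa [Finset.sum_range_succ] using
    (hasSum_nat_add_iff' (f := fun n : ℕ => t ^ n / n !) 1).mpr (hasSum_pow_div_factorial t)

lemma hasSum_pow_add_two_div_factorial (t : ℝ) :
    HasSum (fun k : ℕ => t ^ (k + 2) / (k + 2)!) (exp t - 1 - t) := by
  simpa [Finset.sum_range_succ, sub_sub] using
    (hasSum_nat_add_iff' (f := fun n : ℕ => t ^ n / n !) 2).mpr (hasSum_pow_div_factorial t)

lemma pow_add_two_div_factorial_mul_add_inv (a t : ℝ) (k : ℕ) :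
    t ^ (k + 2) / (k + 1)! * (a + 1 / ((k : ℝ) + 2)) =
      a * t * (t ^ (k + 1) / (k + 1)!) + t ^ (k + 2) / (k + 2)! := by
  rw [factorial_succ (k + 1)]
  push_cast
  field_simp
  ring

lemma hasSum_pow_add_two_div_factorial_mul_add_inv (a t : ℝ) :
    HasSum (fun k : ℕ => t ^ (k + 2) / (k + 1)! * (a + 1 / ((k : ℝ) + 2)))
      (a * t * (exp t - 1) + (exp t - 1 - t)) := by
  simpa only [pow_add_two_div_factorial_mul_add_inv] using
    ((hasSum_pow_succ_div_factorial t).mul_left (a * t)).add (hasSum_pow_add_two_div_factorial t)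

theorem phi_eq_series_general (α y : ℝ) (hy0 : 0 < y) :
    ∃ S : ℝ,
      HasSum (fun k : ℕ =>
        (Real.log (1 / y)) ^ (k + 2) / (Nat.factorial (k + 1)) * (α - 1 + 1 / ((k : ℝ) + 2))) S ∧
      y * Real.log y + (1 - α) * (1 - y) * Real.log y + (1 - y) = y * S := by
  refine ⟨_, hasSum_pow_add_two_div_factorial_mul_add_inv (α - 1) (log (1 / y)), ?_⟩
  have hexp : exp (log (1 / y)) = 1 / y := exp_log (by positivity)
  have hlog : log (1 / y) = -log y := by rw [one_div, log_inv]
  rw [hexp, hlog]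
  field_simp
  ring

/-- For `y ∈ (0,1)` and real `α`, the identity
`y log y + (1−α)(1−y) log y + (1−y) = y · Σ_{k=2}^∞ (log(1/y))^k/(k−1)! · (α−1+1/k)`
holds, the series being convergent (the sum below is indexed so that `k+2` ranges
over `2, 3, …`). -/
theorem phi_eq_series (α y : ℝ) (hy0 : 0 < y) (hy1 : y < 1) :
    ∃ S : ℝ,
      HasSum (fun k : ℕ =>
        (Real.log (1 / y)) ^ (k + 2) / (Nat.factorial (k + 1)) * (α - 1 + 1 / ((k : ℝ) + 2))) S ∧
      y * Real.log y + (1 - α) * (1 - y) * Real.log y + (1 - y) = y * S :=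
  phi_eq_series_general α y hy0
end

section
/- Let α be a real number with 2α≤1. Then for every y∈(0,1), y log y + (1−α)(1−y) log y + (1−y) ≤ 0. -/
/-!
Since `log y < 0` and `1 - α ≥ 1/2`, the function is at most `(1 + y)/2 · log y + (1 - y)`,
which is nonpositive by the Padé-type bound `log y ≤ 2 (y - 1)/(y + 1)` on `(0, 1]`. That bound
is the first term of the series `log (1 + x) - log (1 - x) = 2 ∑ x^(2k+1)/(2k+1)` at
`x = (1 - y)/(1 + y)`.
-/

open Real

lemma two_mul_le_log_one_add_sub_log_one_sub {x : ℝ} (hx0 : 0 ≤ x) (hx1 : x < 1) :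
    2 * x ≤ log (1 + x) - log (1 - x) := by
  have hsum := hasSum_log_sub_log_of_abs_lt_one (abs_lt.mpr ⟨by linarith, hx1⟩)
  simpa using le_hasSum hsum 0 fun k _ => by positivity

lemma log_le_two_mul_sub_one_div_add_one {y : ℝ} (hy0 : 0 < y) (hy1 : y ≤ 1) :
    log y ≤ 2 * (y - 1) / (y + 1) := by
  have hx0 : 0 ≤ (1 - y) / (1 + y) := div_nonneg (by linarith) (by linarith)
  have hx1 : (1 - y) / (1 + y) < 1 := (div_lt_one (by linarith)).mpr (by linarith)
  have hlog : log (1 + (1 - y) / (1 + y)) - log (1 - (1 - y) / (1 + y)) = -log y := by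
    rw [← log_div (by linarith) (by linarith), ← log_inv]
    congr 1
    field_simp [hy0.ne']
    ring
  have h := two_mul_le_log_one_add_sub_log_one_sub hx0 hx1
  rw [hlog] at h
  have : 2 * (y - 1) / (y + 1) = -(2 * ((1 - y) / (1 + y))) := by ring
  linarith

/-- If `2α ≤ 1`, then `Φ_{α,1}(y) = y log y + (1−α)(1−y) log y + (1−y) ≤ 0` for all
`y ∈ (0,1)`. -/
theorem phi_nonpos_of_two_alpha_le_one (α : ℝ) (hα : 2 * α ≤ 1)
    (y : ℝ) (hy0 : 0 < y) (hy1 : y < 1) :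
    y * Real.log y + (1 - α) * (1 - y) * Real.log y + (1 - y) ≤ 0 := by
  have hpade : (y + 1) * log y ≤ 2 * (y - 1) := by
    rw [mul_comm, ← le_div_iff₀ (by linarith)]
    exact log_le_two_mul_sub_one_div_add_one hy0 hy1.le
  have hexcess : (1 / 2 - α) * ((1 - y) * log y) ≤ 0 :=
    mul_nonpos_of_nonneg_of_nonpos (by linarith)
      (mul_nonpos_of_nonneg_of_nonpos (by linarith) (log_nonpos hy0.le hy1.le))
  linear_combination hpade / 2 + hexcess
end

section
/- Let α, β be real numbers with 2α≤1≤β. Then for every y∈(0,1), y^β log y + (β−α)(1−y) log y + (1−y) ≤ 0. -/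
/-!
Write `l = log y < 0`. The tangent-line bound `exp t ≥ 1 + t` gives
`y ^ β ≥ y (1 + (β - 1) l)`, and since `(1 - y) l < 0` the coefficient `β - α` may be lowered to
`β - 1/2`. After these two substitutions `Φ_{α,β}(y)` is bounded by
`(β - 1) l (y l + 1 - y) + ((1 + y) l + 2 (1 - y)) / 2`, where the first term is `≤ 0` because
`y l ≥ y - 1`, and the second because `log y ≤ 2 (y - 1) / (y + 1)` on `(0, 1]`.
-/

open Real

lemma sub_one_le_mul_log {y : ℝ} (hy : 0 < y) : y - 1 ≤ y * log y := by
  have h := mul_le_mul_of_nonneg_left (one_sub_inv_le_log_of_pos hy) hy.le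
  rwa [mul_sub, mul_one, mul_inv_cancel₀ hy.ne'] at h

lemma one_add_mul_log_le {y : ℝ} (hy0 : 0 < y) (hy1 : y ≤ 1) :
    (1 + y) * log y ≤ 2 * (y - 1) := by
  have hy : y⁻¹ - 1 + 2 = (1 + y) / y := by field_simp; ring
  have h := le_log_one_add_of_nonneg (x := y⁻¹ - 1) (by linarith [one_le_inv₀ hy0 |>.mpr hy1])
  rw [add_sub_cancel, log_inv, hy, div_div_eq_mul_div, div_le_iff₀ (by positivity),
    mul_assoc, sub_mul, inv_mul_cancel₀ hy0.ne'] at h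
  linarith

lemma mul_one_add_mul_log_le_rpow {y : ℝ} (hy : 0 < y) (β : ℝ) :
    y * (1 + (β - 1) * log y) ≤ y ^ β := by
  have h : y ^ β = y * exp ((β - 1) * log y) := by
    rw [rpow_def_of_pos hy, ← exp_log hy, ← exp_add, log_exp]
    ring_nf
  rw [h]
  exact mul_le_mul_of_nonneg_left (by linarith [add_one_le_exp ((β - 1) * log y)]) hy.le

/-- If `2α ≤ 1 ≤ β`, then `Φ_{α,β}(y) = y^β log y + (β−α)(1−y) log y + (1−y) ≤ 0`
for all `y ∈ (0,1)`. -/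
theorem phi_general_nonpos (α β : ℝ) (hα : 2 * α ≤ 1) (hβ : 1 ≤ β)
    (y : ℝ) (hy0 : 0 < y) (hy1 : y < 1) :
    y ^ β * Real.log y + (β - α) * (1 - y) * Real.log y + (1 - y) ≤ 0 := by
  have hl : log y < 0 := log_neg hy0 hy1
  have hpow : y ^ β * log y ≤ y * (1 + (β - 1) * log y) * log y :=
    mul_le_mul_of_nonpos_right (mul_one_add_mul_log_le_rpow hy0 β) hl.le
  have hcoef : (β - α) * ((1 - y) * log y) ≤ (β - 1 / 2) * ((1 - y) * log y) :=
    mul_le_mul_of_nonpos_right (by linarith) (mul_nonpos_of_nonneg_of_nonpos (by linarith) hl.le)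
  have hfirst : (β - 1) * (log y * (y * log y + 1 - y)) ≤ 0 :=
    mul_nonpos_of_nonneg_of_nonpos (by linarith)
      (mul_nonpos_of_nonpos_of_nonneg hl.le (by linarith [sub_one_le_mul_log hy0]))
  have hsecond := one_add_mul_log_le hy0 hy1.le
  calc y ^ β * log y + (β - α) * (1 - y) * log y + (1 - y)
      ≤ y * (1 + (β - 1) * log y) * log y + (β - 1 / 2) * ((1 - y) * log y) + (1 - y) := by
        linarith
    _ = (β - 1) * (log y * (y * log y + 1 - y)) + ((1 + y) * log y - 2 * (y - 1)) / 2 := by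
        ring
    _ ≤ 0 := by linarith
end

section
/- Let 0<q<1 and let α, β be real numbers with β≥0. Then lim_{x→∞} [ ψ_q(x+β) − log((1−q^x)/(1−q)) + (β−α)·(log q)·q^x/(1−q^x) ] = 0. -/
/-- The `q`-digamma function for `0 < q < 1`:
`ψ_q(x) = −log(1−q) + log q · Σ_{k=1}^∞ q^{kx}/(1−q^k)`. -/
noncomputable def qDigamma (q x : ℝ) : ℝ :=
  -Real.log (1 - q) + Real.log q * ∑' k : ℕ, q ^ (((k : ℝ) + 1) * x) / (1 - q ^ (k + 1))

/-!
As `x → ∞` every term of the series in `ψ_q(x)` tends to `0`, and for `x ≥ 1` the `k`-th term is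
dominated by `q^(k+1)/(1-q)`, so by Tannery's theorem `ψ_q(x) → −log(1−q)`. Since `q^x → 0`, also
`log((1−q^x)/(1−q)) → −log(1−q)` and `q^x/(1−q^x) → 0`.
-/

open Filter Real Topology

section

variable {q : ℝ}

lemma rpow_succ_mul_div_le (hq0 : 0 < q) (hq1 : q < 1) {x : ℝ} (hx : 1 ≤ x) (k : ℕ) :
    q ^ (((k : ℝ) + 1) * x) / (1 - q ^ (k + 1)) ≤ q ^ (k + 1) / (1 - q) := by
  have hnum : q ^ (((k : ℝ) + 1) * x) ≤ q ^ (k + 1) := by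
    rw [← rpow_natCast, Nat.cast_succ]
    exact rpow_le_rpow_of_exponent_ge hq0 hq1.le (le_mul_of_one_le_right (by positivity) hx)
  have hden : q ^ (k + 1) ≤ q := pow_le_of_le_one hq0.le hq1.le k.succ_ne_zero
  exact div_le_div₀ (by positivity) hnum (by linarith) (by linarith)

lemma tendsto_tsum_rpow_succ_mul_div (hq0 : 0 < q) (hq1 : q < 1) :
    Tendsto (fun x : ℝ => ∑' k : ℕ, q ^ (((k : ℝ) + 1) * x) / (1 - q ^ (k + 1))) atTop (𝓝 0) := by
  have hsum : Summable fun k : ℕ => q ^ (k + 1) / (1 - q) :=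
    ((summable_geometric_of_lt_one hq0.le hq1).comp_injective (add_left_injective 1)).div_const _
  have hterm (k : ℕ) :
      Tendsto (fun x : ℝ => q ^ (((k : ℝ) + 1) * x) / (1 - q ^ (k + 1))) atTop (𝓝 0) := by
    simpa using ((tendsto_rpow_atTop_of_base_lt_one q (by linarith) hq1).comp
      (tendsto_id.const_mul_atTop (by positivity : (0 : ℝ) < k + 1))).div_const _
  have hbound : ∀ᶠ x in atTop, ∀ k : ℕ,
      ‖q ^ (((k : ℝ) + 1) * x) / (1 - q ^ (k + 1))‖ ≤ q ^ (k + 1) / (1 - q) := by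
    filter_upwards [eventually_ge_atTop 1] with x hx k
    have hden : q ^ (k + 1) < 1 := pow_lt_one₀ hq0.le hq1 k.succ_ne_zero
    rw [Real.norm_of_nonneg (div_nonneg (rpow_nonneg hq0.le _) (by linarith))]
    exact rpow_succ_mul_div_le hq0 hq1 hx k
  simpa using tendsto_tsum_of_dominated_convergence hsum hterm hbound

lemma tendsto_qDigamma_atTop (hq0 : 0 < q) (hq1 : q < 1) :
    Tendsto (qDigamma q) atTop (𝓝 (-log (1 - q))) := by
  have h := (tendsto_tsum_rpow_succ_mul_div hq0 hq1).const_mul (log q) |>.const_add (-log (1 - q))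
  rwa [mul_zero, add_zero] at h

end

theorem tendsto_qDigamma_combination_general (q α β : ℝ) (hq0 : 0 < q) (hq1 : q < 1) :
    Filter.Tendsto
      (fun x : ℝ => qDigamma q (x + β) - Real.log ((1 - q ^ x) / (1 - q))
        + (β - α) * Real.log q * q ^ x / (1 - q ^ x))
      Filter.atTop (nhds 0) := by
  have hqx : Tendsto (fun x : ℝ => q ^ x) atTop (𝓝 0) :=
    tendsto_rpow_atTop_of_base_lt_one q (by linarith) hq1
  have hone_sub : Tendsto (fun x : ℝ => 1 - q ^ x) atTop (𝓝 1) := by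
    simpa using (tendsto_const_nhds (x := (1 : ℝ))).sub hqx
  have hψ : Tendsto (fun x : ℝ => qDigamma q (x + β)) atTop (𝓝 (-log (1 - q))) :=
    (tendsto_qDigamma_atTop hq0 hq1).comp (tendsto_atTop_add_const_right atTop β tendsto_id)
  have hlog : Tendsto (fun x : ℝ => log ((1 - q ^ x) / (1 - q))) atTop (𝓝 (-log (1 - q))) := by
    have h := (hone_sub.div_const (1 - q)).log (div_ne_zero one_ne_zero (by linarith))
    rwa [one_div, log_inv] at h
  have hcorr : Tendsto (fun x : ℝ => (β - α) * log q * q ^ x / (1 - q ^ x)) atTop (𝓝 0) := by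
    have h := (hqx.const_mul ((β - α) * log q)).div hone_sub one_ne_zero
    rwa [mul_zero, zero_div] at h
  simpa using (hψ.sub hlog).add hcorr

/-- For `0 < q < 1`, real `α` and `β ≥ 0`,
`ψ_q(x+β) − log((1−q^x)/(1−q)) + (β−α)·(log q)·q^x/(1−q^x) → 0` as `x → ∞`. -/
theorem tendsto_qDigamma_combination (q α β : ℝ) (hq0 : 0 < q) (hq1 : q < 1) (hβ : 0 ≤ β) :
    Filter.Tendsto
      (fun x : ℝ => qDigamma q (x + β) - Real.log ((1 - q ^ x) / (1 - q))
        + (β - α) * Real.log q * q ^ x / (1 - q ^ x))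
      Filter.atTop (nhds 0) :=
  tendsto_qDigamma_combination_general q α β hq0 hq1
end

section
/- Let 0<q<1, let n≥1 be an integer, let x_1,…,x_n>0, and let p_1,…,p_n≥0 with Σ_{k=1}^n p_k = 1. Write S = Σ_{k=1}^n p_k x_k and E = exp( [ Li₂(1−q^S) − Σ_{k=1}^n p_k Li₂(1−q^{x_k}) ] / log q ). Then [ ((1−q^S)/(1−q))^{S} / ∏_{k=1}^n ((1−q^{x_k})/(1−q))^{p_k x_k} ] · E ≤ Γ_q(S+1) / ∏_{k=1}^n Γ_q(x_k+1)^{p_k} ≤ [ ((1−q^S)/(1−q))^{S+1/2} / ∏_{k=1}^n ((1−q^{x_k})/(1−q))^{p_k(x_k+1/2)} ] · E. -/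
/-!
Expanding in powers of `q ^ y`, `log Γ_q(y + 1) = -y log (1 - q) + ∑ aₘ q^((m+1)y) + const`, and,
by Euler's reflection formula for `Li₂`, the q-Stirling exponent
`y log ((1 - q^y)/(1 - q)) + Li₂(1 - q^y)/log q` equals `-y log (1 - q) + ∑ bₘ q^((m+1)y) + const`,
while `½ log (1 - q^y) = -∑ hₘ q^((m+1)y)`. The coefficient inequalities `aₘ ≤ bₘ ≤ aₘ + hₘ`
reduce to `a ≤ 1 / log (1 + 1/a) ≤ a + 1/2`, so the differences between `log Γ_q(y + 1)` and the
two q-Stirling exponents (the second with factor `y + 1/2` in place of `y`) are power series in `q ^ y` with nonnegative coefficients, hence convex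
in `y`. Jensen's inequality for these differences is the theorem after exponentiation.
-/

open Real MeasureTheory Set

namespace QGammaJensen

lemma neg_log_one_sub_div_le {t z : ℝ} (ht0 : 0 < t) (htz : t ≤ z) (hz : z < 1) :
    -(log (1 - t) / t) ≤ (1 - z)⁻¹ := by
  have h1t : 0 < 1 - t := by linarith
  have hlog : -log (1 - t) ≤ t / (1 - t) := by
    rw [← log_inv]
    calc log (1 - t)⁻¹ ≤ (1 - t)⁻¹ - 1 := log_le_sub_one_of_pos (inv_pos.2 h1t)
      _ = t / (1 - t) := by field_simp; ring
  calc -(log (1 - t) / t) = -log (1 - t) / t := by ring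
    _ ≤ t / (1 - t) / t := by gcongr
    _ = (1 - t)⁻¹ := by field_simp
    _ ≤ (1 - z)⁻¹ := by gcongr

lemma measurable_log_one_sub_div : Measurable fun t : ℝ => log (1 - t) / t :=
  (measurable_log.comp (measurable_const.sub measurable_id)).div measurable_id

lemma intervalIntegrable_log_one_sub_div {z : ℝ} (hz0 : 0 ≤ z) (hz1 : z < 1) :
    IntervalIntegrable (fun t => log (1 - t) / t) volume 0 z := by
  rw [intervalIntegrable_iff_integrableOn_Ioc_of_le hz0]
  refine Measure.integrableOn_of_bounded (M := (1 - z)⁻¹) measure_Ioc_lt_top.ne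
    measurable_log_one_sub_div.aestronglyMeasurable ?_
  filter_upwards [ae_restrict_mem measurableSet_Ioc] with t ⟨ht0, htz⟩
  have hlog : log (1 - t) ≤ 0 := log_nonpos (by linarith) (by linarith)
  rw [norm_eq_abs, abs_of_nonpos (div_nonpos_of_nonpos_of_nonneg hlog ht0.le)]
  exact neg_log_one_sub_div_le ht0 htz hz1

lemma hasDerivAt_dilog {z : ℝ} (hz0 : 0 < z) (hz1 : z < 1) :
    HasDerivAt dilog (-(log (1 - z) / z)) z := by
  have hcont : ContinuousAt (fun t => log (1 - t) / t) z :=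
    ((continuousAt_log (by linarith)).comp (by fun_prop)).div continuousAt_id hz0.ne'
  exact (intervalIntegral.integral_hasDerivAt_right (intervalIntegrable_log_one_sub_div hz0.le hz1)
    measurable_log_one_sub_div.stronglyMeasurable.stronglyMeasurableAtFilter hcont).neg

lemma hasSum_dilog {w : ℝ} (hw0 : 0 ≤ w) (hw1 : w < 1) :
    HasSum (fun m : ℕ => w ^ (m + 1) / ((m : ℝ) + 1) ^ 2) (dilog w) := by
  have hseries : ∀ t ∈ Ioc 0 w,
      HasSum (fun m : ℕ => t ^ m / ((m : ℝ) + 1)) (-(log (1 - t) / t)) := by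
    rintro t ⟨ht0, htw⟩
    have h := (hasSum_pow_div_log_of_abs_lt_one (x := t)
      (by rw [abs_of_pos ht0]; linarith)).div_const t
    rw [neg_div] at h
    refine h.congr_fun fun m => ?_
    field_simp
    ring
  have h := intervalIntegral.hasSum_integral_of_dominated_convergence (μ := volume) (a := 0)
    (b := w) (F := fun (m : ℕ) (t : ℝ) => t ^ m / ((m : ℝ) + 1)) (fun m _ => w ^ m)
    (fun m => by fun_prop)
    (fun m => ae_of_all _ fun t ht => by
      rw [uIoc_of_le hw0] at ht
      rw [norm_of_nonneg (by have := ht.1.le; positivity)]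
      calc t ^ m / ((m : ℝ) + 1) ≤ t ^ m := div_le_self (by have := ht.1.le; positivity)
            (by linarith [m.cast_nonneg (α := ℝ)])
        _ ≤ w ^ m := pow_le_pow_left₀ ht.1.le ht.2 m)
    (ae_of_all _ fun _ _ => summable_geometric_of_lt_one hw0 hw1)
    intervalIntegrable_const
    (ae_of_all _ fun t ht => hseries t (by rwa [uIoc_of_le hw0] at ht))
  rw [intervalIntegral.integral_neg] at h
  refine h.congr_fun fun m => ?_
  rw [intervalIntegral.integral_div, integral_pow]
  field_simp
  ring

lemma exists_dilog_reflection :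
    ∃ C, ∀ w ∈ Ioo (0 : ℝ) 1, dilog (1 - w) + log w * log (1 - w) + dilog w = C := by
  have hderiv : ∀ w ∈ Ioo (0 : ℝ) 1,
      HasDerivAt (fun w => dilog (1 - w) + log w * log (1 - w) + dilog w) 0 w := by
    rintro w ⟨hw0, hw1⟩
    have h1w : 0 < 1 - w := by linarith
    have hsub : HasDerivAt (fun w : ℝ => 1 - w) (-1) w := by
      simpa using (hasDerivAt_id w).const_sub 1
    have h := (((hasDerivAt_dilog h1w (by linarith)).comp w hsub).add
      ((hasDerivAt_log hw0.ne').mul ((hasDerivAt_log h1w.ne').comp w hsub))).add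
      (hasDerivAt_dilog hw0 hw1)
    refine h.congr_deriv ?_
    rw [sub_sub_cancel, Function.comp_apply]
    field_simp
    ring
  exact isOpen_Ioo.exists_is_const_of_deriv_eq_zero isPreconnected_Ioo
    (fun w hw => (hderiv w hw).differentiableAt.differentiableWithinAt)
    (fun w hw => (hderiv w hw).deriv)

lemma log_one_add_inv_le_inv {a : ℝ} (ha : 0 < a) : log (1 + a⁻¹) ≤ a⁻¹ := by
  linarith [log_le_sub_one_of_pos (show 0 < 1 + a⁻¹ by positivity)]

lemma two_div_two_mul_add_one_le_log_one_add_inv {a : ℝ} (ha : 0 < a) :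
    2 / (2 * a + 1) ≤ log (1 + a⁻¹) := by
  have h := le_hasSum (hasSum_log_one_add_inv ha) 0 fun k _ => by positivity
  simpa [div_eq_mul_inv] using h

lemma le_inv_log_one_add_inv {a : ℝ} (ha : 0 < a) : a ≤ (log (1 + a⁻¹))⁻¹ := by
  have hpos : 0 < log (1 + a⁻¹) := log_pos (by simpa using ha)
  simpa using inv_anti₀ hpos (log_one_add_inv_le_inv ha)

lemma inv_log_one_add_inv_le {a : ℝ} (ha : 0 < a) : (log (1 + a⁻¹))⁻¹ ≤ a + 1 / 2 := by
  calc (log (1 + a⁻¹))⁻¹ ≤ (2 / (2 * a + 1))⁻¹ :=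
        inv_anti₀ (by positivity) (two_div_two_mul_add_one_le_log_one_add_inv ha)
    _ = a + 1 / 2 := by field_simp

noncomputable def powSum (c : ℕ → ℝ) (r : ℝ) : ℝ := ∑' m, c m * r ^ (m + 1)

section PowSum

variable {c d : ℕ → ℝ} {r : ℝ}

lemma summable_mul_pow_succ {C : ℝ} (hc0 : ∀ m, 0 ≤ c m) (hcC : ∀ m, c m ≤ C) (hr0 : 0 ≤ r)
    (hr1 : r < 1) : Summable fun m => c m * r ^ (m + 1) := by
  refine Summable.of_nonneg_of_le (fun m => by have := hc0 m; positivity) (fun m => ?_)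
    ((summable_geometric_of_lt_one hr0 hr1).mul_left (C * r))
  rw [pow_succ, ← mul_assoc, mul_right_comm C]
  gcongr
  exact hcC m

lemma powSum_sub (hc : Summable fun m => c m * r ^ (m + 1))
    (hd : Summable fun m => d m * r ^ (m + 1)) : powSum (c - d) r = powSum c r - powSum d r := by
  simp only [powSum, Pi.sub_apply, sub_mul]
  exact hc.tsum_sub hd

lemma powSum_add (hc : Summable fun m => c m * r ^ (m + 1))
    (hd : Summable fun m => d m * r ^ (m + 1)) : powSum (c + d) r = powSum c r + powSum d r := by
  simp only [powSum, Pi.add_apply, add_mul]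
  exact hc.tsum_add hd

end PowSum

lemma convexOn_tsum {ι E : Type*} [AddCommMonoid E] [Module ℝ E] {s : Set E} {f : ι → E → ℝ}
    (hs : Convex ℝ s) (hf : ∀ i, ConvexOn ℝ s (f i)) (hsum : ∀ x ∈ s, Summable fun i => f i x) :
    ConvexOn ℝ s fun x => ∑' i, f i x := by
  refine ⟨hs, fun x hx y hy a b ha hb hab => ?_⟩
  calc ∑' i, f i (a • x + b • y) ≤ ∑' i, (a * f i x + b * f i y) :=
        (hsum _ (hs hx hy ha hb hab)).tsum_le_tsum (fun i => (hf i).2 hx hy ha hb hab)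
          (((hsum x hx).mul_left a).add ((hsum y hy).mul_left b))
    _ = a • ∑' i, f i x + b • ∑' i, f i y := by
        rw [((hsum x hx).mul_left a).tsum_add ((hsum y hy).mul_left b), tsum_mul_left,
          tsum_mul_left, smul_eq_mul, smul_eq_mul]

lemma convexOn_powSum_rpow {c : ℕ → ℝ} {C q : ℝ} (hq0 : 0 < q) (hq1 : q < 1)
    (hc0 : ∀ m, 0 ≤ c m) (hcC : ∀ m, c m ≤ C) :
    ConvexOn ℝ (Ioi 0) fun y : ℝ => powSum c (q ^ y) := by
  refine convexOn_tsum (convex_Ioi 0) (fun m => ?_) fun y hy =>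
    summable_mul_pow_succ hc0 hcC (rpow_nonneg hq0.le y) (rpow_lt_one hq0.le hq1 hy)
  exact (((convexOn_rpow_left hq0).pow (fun y _ => (rpow_pos_of_pos hq0 y).le) (m + 1)).smul
    (hc0 m)).subset (subset_univ _) (convex_Ioi 0)

noncomputable def qGammaCoeff (q : ℝ) (m : ℕ) : ℝ := q ^ (m + 1) / ((m + 1) * (1 - q ^ (m + 1)))

noncomputable def dilogCoeff (q : ℝ) (m : ℕ) : ℝ := (((m : ℝ) + 1) ^ 2 * -log q)⁻¹

noncomputable def halfLogCoeff (m : ℕ) : ℝ := (2 * ((m : ℝ) + 1))⁻¹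

section Coeff

variable {q : ℝ}

lemma qGammaCoeff_nonneg (hq0 : 0 ≤ q) (hq1 : q < 1) (m : ℕ) : 0 ≤ qGammaCoeff q m := by
  have : q ^ (m + 1) < 1 := pow_lt_one₀ hq0 hq1 (by omega)
  unfold qGammaCoeff
  exact div_nonneg (by positivity) (mul_nonneg (by positivity) (by linarith))

lemma qGammaCoeff_le (hq0 : 0 ≤ q) (hq1 : q < 1) (m : ℕ) :
    qGammaCoeff q m ≤ q ^ (m + 1) / (1 - q) := by
  have hqm : q ^ (m + 1) ≤ q := pow_le_of_le_one hq0 hq1.le (by omega)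
  have h1 : 0 ≤ 1 - q ^ (m + 1) := by linarith
  unfold qGammaCoeff
  gcongr
  nlinarith [mul_nonneg (m.cast_nonneg : (0 : ℝ) ≤ m) h1]

lemma summable_qGammaCoeff_mul_pow (hq0 : 0 ≤ q) (hq1 : q < 1) {r : ℝ} (hr0 : 0 ≤ r)
    (hrq : r * q < 1) : Summable fun m => qGammaCoeff q m * r ^ (m + 1) := by
  refine Summable.of_nonneg_of_le
    (fun m => mul_nonneg (qGammaCoeff_nonneg hq0 hq1 m) (by positivity)) (fun m => ?_)
    ((summable_geometric_of_lt_one (by positivity) hrq).mul_left (r * q / (1 - q)))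
  calc qGammaCoeff q m * r ^ (m + 1) ≤ q ^ (m + 1) / (1 - q) * r ^ (m + 1) := by
        gcongr; exact qGammaCoeff_le hq0 hq1 m
    _ = r * q / (1 - q) * (r * q) ^ m := by ring

/-- With `a = q ^ (m + 1) / (1 - q ^ (m + 1))` the three coefficients are `a`, `(log (1 + a⁻¹))⁻¹`
and `1 / 2`, each divided by `m + 1`. -/
lemma log_one_add_inv_eq (hq0 : 0 < q) (hq1 : q < 1) (m : ℕ) :
    log (1 + (q ^ (m + 1) / (1 - q ^ (m + 1)))⁻¹) = ((m : ℝ) + 1) * -log q := by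
  have h1 : q ^ (m + 1) < 1 := pow_lt_one₀ hq0.le hq1 m.succ_ne_zero
  have h0 : 0 < q ^ (m + 1) := by positivity
  rw [inv_div, show 1 + (1 - q ^ (m + 1)) / q ^ (m + 1) = (q ^ (m + 1))⁻¹ by field_simp; ring,
    log_inv, log_pow]
  push_cast
  ring

lemma qGammaCoeff_le_dilogCoeff (hq0 : 0 < q) (hq1 : q < 1) (m : ℕ) :
    qGammaCoeff q m ≤ dilogCoeff q m := by
  have h1 : q ^ (m + 1) < 1 := pow_lt_one₀ hq0.le hq1 m.succ_ne_zero
  have ha : 0 < q ^ (m + 1) / (1 - q ^ (m + 1)) := div_pos (by positivity) (by linarith)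
  have h := le_inv_log_one_add_inv ha
  rw [log_one_add_inv_eq hq0 hq1] at h
  have hm : (0 : ℝ) < m + 1 := by positivity
  calc qGammaCoeff q m = (q ^ (m + 1) / (1 - q ^ (m + 1))) / (m + 1) := by
        rw [qGammaCoeff, div_div, mul_comm]
    _ ≤ (((m : ℝ) + 1) * -log q)⁻¹ / (m + 1) := by gcongr
    _ = dilogCoeff q m := by rw [dilogCoeff, div_eq_mul_inv, ← mul_inv]; ring_nf

lemma dilogCoeff_le_qGammaCoeff_add_halfLogCoeff (hq0 : 0 < q) (hq1 : q < 1) (m : ℕ) :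
    dilogCoeff q m ≤ qGammaCoeff q m + halfLogCoeff m := by
  have h1 : q ^ (m + 1) < 1 := pow_lt_one₀ hq0.le hq1 m.succ_ne_zero
  have ha : 0 < q ^ (m + 1) / (1 - q ^ (m + 1)) := div_pos (by positivity) (by linarith)
  have h := inv_log_one_add_inv_le ha
  rw [log_one_add_inv_eq hq0 hq1] at h
  have hm : (0 : ℝ) < m + 1 := by positivity
  calc dilogCoeff q m = (((m : ℝ) + 1) * -log q)⁻¹ / (m + 1) := by
        rw [dilogCoeff, div_eq_mul_inv, ← mul_inv]; ring_nf
    _ ≤ (q ^ (m + 1) / (1 - q ^ (m + 1)) + 1 / 2) / (m + 1) := by gcongr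
    _ = qGammaCoeff q m + halfLogCoeff m := by
        rw [qGammaCoeff, halfLogCoeff]; field_simp

lemma dilogCoeff_le (hq0 : 0 < q) (hq1 : q < 1) (m : ℕ) : dilogCoeff q m ≤ (-log q)⁻¹ := by
  have hlog : 0 < -log q := neg_pos.2 (log_neg hq0 hq1)
  unfold dilogCoeff
  gcongr
  exact le_mul_of_one_le_left hlog.le (one_le_pow₀ (by linarith [m.cast_nonneg (α := ℝ)]))

lemma halfLogCoeff_nonneg (m : ℕ) : 0 ≤ halfLogCoeff m := by
  unfold halfLogCoeff; positivity

lemma halfLogCoeff_le (m : ℕ) : halfLogCoeff m ≤ 1 / 2 := by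
  unfold halfLogCoeff
  rw [one_div]
  gcongr
  linarith [m.cast_nonneg (α := ℝ)]

end Coeff

section Series

variable {q : ℝ}

lemma hasSum_neg_log_one_sub_mul_pow (hq0 : 0 ≤ q) (hq1 : q < 1) {r : ℝ} (hr0 : 0 ≤ r)
    (hrq : r * q < 1) :
    HasSum (fun j : ℕ => -log (1 - r * q ^ (j + 1))) (powSum (qGammaCoeff q) r) := by
  set f : ℕ × ℕ → ℝ := fun mj => (r * q ^ (mj.2 + 1)) ^ (mj.1 + 1) / (mj.1 + 1)
  have hf0 : 0 ≤ f := fun mj => by positivity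
  have hrow : ∀ m, HasSum (fun j => f (m, j)) (qGammaCoeff q m * r ^ (m + 1)) := by
    intro m
    have hqm : q ^ (m + 1) < 1 := pow_lt_one₀ hq0 hq1 (by omega)
    have h := ((hasSum_geometric_of_lt_one (by positivity) hqm).mul_left
      (r ^ (m + 1) * q ^ (m + 1) / (m + 1)))
    rw [show qGammaCoeff q m * r ^ (m + 1)
        = r ^ (m + 1) * q ^ (m + 1) / (m + 1) * (1 - q ^ (m + 1))⁻¹ by
      rw [qGammaCoeff]; field_simp [(sub_pos.2 hqm).ne']]
    refine h.congr_fun fun j => ?_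
    simp only [f, mul_pow, ← pow_mul]
    ring_nf
  have hcol : ∀ j, HasSum (fun m => f (m, j)) (-log (1 - r * q ^ (j + 1))) := by
    intro j
    have hq : q ^ (j + 1) ≤ q := pow_le_of_le_one hq0 hq1.le (by omega)
    have h := hasSum_pow_div_log_of_abs_lt_one (x := r * q ^ (j + 1))
      (by rw [abs_of_nonneg (by positivity)]; nlinarith [pow_nonneg hq0 (j + 1)])
    exact h
  have hf : Summable f := (summable_prod_of_nonneg hf0).2
    ⟨fun m => (hrow m).summable, (summable_qGammaCoeff_mul_pow hq0 hq1 hr0 hrq).congr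
      fun m => (hrow m).tsum_eq.symm⟩
  rw [powSum, (hf.hasSum.prod_fiberwise hrow).tsum_eq]
  exact ((Equiv.prodComm ℕ ℕ).hasSum_iff.2 hf.hasSum).prod_fiberwise hcol

lemma qGamma_add_one_eq_exp (hq0 : 0 < q) (hq1 : q < 1) {y : ℝ} (hy : -1 < y) :
    qGamma q (y + 1) = exp (-(y * log (1 - q)) +
      (powSum (qGammaCoeff q) (q ^ y) - powSum (qGammaCoeff q) 1)) := by
  have hyq : q ^ y * q < 1 := by
    rw [← rpow_add_one hq0.ne']; exact rpow_lt_one hq0.le hq1 (by linarith)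
  have hpow : ∀ j : ℕ, q ^ ((j : ℝ) + (y + 1)) = q ^ y * q ^ (j + 1) := fun j => by
    rw [show (j : ℝ) + (y + 1) = y + ((j + 1 : ℕ) : ℝ) by push_cast; ring, rpow_add hq0,
      rpow_natCast]
  have hpos : ∀ j : ℕ, 0 < 1 - q ^ y * q ^ (j + 1) := fun j => by
    have : q ^ (j + 1) ≤ q := pow_le_of_le_one hq0.le hq1.le (by omega)
    nlinarith [rpow_pos_of_pos hq0 y]
  have hlog : HasSum (fun j : ℕ => log ((1 - q ^ (j + 1)) / (1 - q ^ ((j : ℝ) + (y + 1)))))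
      (powSum (qGammaCoeff q) (q ^ y) - powSum (qGammaCoeff q) 1) := by
    refine ((hasSum_neg_log_one_sub_mul_pow hq0.le hq1 (rpow_nonneg hq0.le y) hyq).sub
      (hasSum_neg_log_one_sub_mul_pow hq0.le hq1 zero_le_one (by linarith))).congr_fun
      fun j => ?_
    have := pow_lt_one₀ hq0.le hq1 (n := j + 1) (by omega)
    rw [hpow, log_div (by linarith) (hpos j).ne', one_mul]
    ring
  rw [qGamma, ← rexp_tsum_eq_tprod (fun j => ?_) hlog.summable, hlog.tsum_eq,
    rpow_def_of_pos (by linarith), ← exp_add]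
  · ring_nf
  · rw [hpow]
    exact div_pos (by linarith [pow_lt_one₀ hq0.le hq1 (n := j + 1) (by omega)]) (hpos j)

lemma dilog_eq_neg_log_mul_powSum (hq0 : 0 < q) (hq1 : q < 1) {w : ℝ} (hw0 : 0 ≤ w)
    (hw1 : w < 1) : dilog w = -log q * powSum (dilogCoeff q) w := by
  have hlog : log q ≠ 0 := (log_neg hq0 hq1).ne
  rw [powSum, ← tsum_mul_left, (hasSum_dilog hw0 hw1).tsum_eq.symm]
  refine tsum_congr fun m => ?_
  rw [dilogCoeff]
  field_simp

lemma log_one_sub_eq_neg_two_mul_powSum {r : ℝ} (hr : |r| < 1) :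
    log (1 - r) = -2 * powSum halfLogCoeff r := by
  rw [powSum, ← tsum_mul_left, ← neg_neg (log (1 - r)),
    ← (hasSum_pow_div_log_of_abs_lt_one hr).tsum_eq, ← tsum_neg]
  refine tsum_congr fun m => ?_
  rw [halfLogCoeff]
  field_simp

end Series

noncomputable def qStirlingLower (q y : ℝ) : ℝ :=
  log ((1 - q ^ y) / (1 - q)) * y + dilog (1 - q ^ y) / log q

noncomputable def qStirlingUpper (q y : ℝ) : ℝ :=
  log ((1 - q ^ y) / (1 - q)) * (y + 1 / 2) + dilog (1 - q ^ y) / log q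

section Stirling

variable {q : ℝ}

lemma qStirlingLower_eq {C : ℝ} (hq0 : 0 < q) (hq1 : q < 1)
    (hC : ∀ w ∈ Ioo (0 : ℝ) 1, dilog (1 - w) + log w * log (1 - w) + dilog w = C)
    {y : ℝ} (hy : 0 < y) :
    qStirlingLower q y = -(y * log (1 - q)) + C / log q + powSum (dilogCoeff q) (q ^ y) := by
  have hw0 : 0 < q ^ y := rpow_pos_of_pos hq0 y
  have hw1 : q ^ y < 1 := rpow_lt_one hq0.le hq1 hy
  have hlog : log q ≠ 0 := (log_neg hq0 hq1).ne
  have hrefl := hC _ ⟨hw0, hw1⟩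
  rw [log_rpow hq0, dilog_eq_neg_log_mul_powSum hq0 hq1 hw0.le hw1] at hrefl
  rw [qStirlingLower, log_div (by linarith) (by linarith),
    show dilog (1 - q ^ y) = C - y * log q * log (1 - q ^ y)
      + log q * powSum (dilogCoeff q) (q ^ y) by linarith]
  field_simp
  ring

lemma qStirlingUpper_eq (hq0 : 0 < q) (hq1 : q < 1) {y : ℝ} (hy : 0 < y) :
    qStirlingUpper q y = qStirlingLower q y - powSum halfLogCoeff (q ^ y) - log (1 - q) / 2 := by
  have hw0 : 0 < q ^ y := rpow_pos_of_pos hq0 y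
  have hw1 : q ^ y < 1 := rpow_lt_one hq0.le hq1 hy
  rw [qStirlingUpper, qStirlingLower, log_div (by linarith) (by linarith),
    log_one_sub_eq_neg_two_mul_powSum (by rw [abs_of_pos hw0]; exact hw1)]
  ring

lemma log_qGamma_add_one (hq0 : 0 < q) (hq1 : q < 1) {y : ℝ} (hy : -1 < y) :
    log (qGamma q (y + 1)) = -(y * log (1 - q)) +
      (powSum (qGammaCoeff q) (q ^ y) - powSum (qGammaCoeff q) 1) := by
  rw [qGamma_add_one_eq_exp hq0 hq1 hy, log_exp]

lemma convexOn_qStirlingLower_sub_log_qGamma (hq0 : 0 < q) (hq1 : q < 1) :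
    ConvexOn ℝ (Ioi 0) (qStirlingLower q - fun y => log (qGamma q (y + 1))) := by
  obtain ⟨C, hC⟩ := exists_dilog_reflection
  have hconv := (convexOn_powSum_rpow hq0 hq1 (c := dilogCoeff q - qGammaCoeff q)
    (C := (-log q)⁻¹) (fun m => sub_nonneg.2 (qGammaCoeff_le_dilogCoeff hq0 hq1 m))
    (fun m => by
      rw [Pi.sub_apply]
      linarith [dilogCoeff_le hq0 hq1 m, qGammaCoeff_nonneg hq0.le hq1 m])).add_const
    (C / log q + powSum (qGammaCoeff q) 1)
  refine hconv.congr fun y (hy : 0 < y) => ?_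
  have hw0 : 0 ≤ q ^ y := rpow_nonneg hq0.le y
  have hw1 : q ^ y < 1 := rpow_lt_one hq0.le hq1 hy
  simp only [Pi.add_apply, Pi.sub_apply]
  rw [qStirlingLower_eq hq0 hq1 hC hy, log_qGamma_add_one hq0 hq1 (by linarith),
    powSum_sub (summable_mul_pow_succ (fun m => (qGammaCoeff_nonneg hq0.le hq1 m).trans
      (qGammaCoeff_le_dilogCoeff hq0 hq1 m)) (dilogCoeff_le hq0 hq1) hw0 hw1)
    (summable_qGammaCoeff_mul_pow hq0.le hq1 hw0 (by nlinarith))]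
  ring

lemma convexOn_log_qGamma_sub_qStirlingUpper (hq0 : 0 < q) (hq1 : q < 1) :
    ConvexOn ℝ (Ioi 0) ((fun y => log (qGamma q (y + 1))) - qStirlingUpper q) := by
  obtain ⟨C, hC⟩ := exists_dilog_reflection
  have hconv := (convexOn_powSum_rpow hq0 hq1
    (c := qGammaCoeff q + halfLogCoeff - dilogCoeff q) (C := 1 / 2)
    (fun m => by
      rw [Pi.sub_apply, Pi.add_apply, sub_nonneg]
      exact dilogCoeff_le_qGammaCoeff_add_halfLogCoeff hq0 hq1 m)
    (fun m => by
      rw [Pi.sub_apply, Pi.add_apply]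
      linarith [qGammaCoeff_le_dilogCoeff hq0 hq1 m, halfLogCoeff_le m])).add_const
    (log (1 - q) / 2 - C / log q - powSum (qGammaCoeff q) 1)
  refine hconv.congr fun y (hy : 0 < y) => ?_
  have hw0 : 0 ≤ q ^ y := rpow_nonneg hq0.le y
  have hw1 : q ^ y < 1 := rpow_lt_one hq0.le hq1 hy
  have hA := summable_qGammaCoeff_mul_pow hq0.le hq1 hw0 (by nlinarith)
  have hB := summable_mul_pow_succ (fun m => (qGammaCoeff_nonneg hq0.le hq1 m).trans
    (qGammaCoeff_le_dilogCoeff hq0 hq1 m)) (dilogCoeff_le hq0 hq1) hw0 hw1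
  have hH := summable_mul_pow_succ halfLogCoeff_nonneg halfLogCoeff_le hw0 hw1
  have hAH : Summable fun m => (qGammaCoeff q + halfLogCoeff) m * (q ^ y) ^ (m + 1) := by
    simpa only [Pi.add_apply, add_mul] using hA.add hH
  simp only [Pi.add_apply, Pi.sub_apply]
  rw [qStirlingUpper_eq hq0 hq1 hy, qStirlingLower_eq hq0 hq1 hC hy,
    log_qGamma_add_one hq0 hq1 (by linarith), powSum_sub hAH hB, powSum_add hA hH]
  ring

end Stirling

noncomputable def jensenGap {ι : Type*} [Fintype ι] (p x : ι → ℝ) (f : ℝ → ℝ) : ℝ :=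
  f (∑ i, p i * x i) - ∑ i, p i * f (x i)

section JensenGap

variable {ι : Type*} [Fintype ι] {p x : ι → ℝ}

lemma jensenGap_le_of_convexOn_sub {s : Set ℝ} {f g : ℝ → ℝ} (h : ConvexOn ℝ s (g - f))
    (hp0 : ∀ i, 0 ≤ p i) (hp1 : ∑ i, p i = 1) (hx : ∀ i, x i ∈ s) :
    jensenGap p x g ≤ jensenGap p x f := by
  have hj := h.map_sum_le (t := Finset.univ) (fun i _ => hp0 i) hp1 fun i _ => hx i
  simp only [Pi.sub_apply, smul_eq_mul, mul_sub, Finset.sum_sub_distrib] at hj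
  unfold jensenGap
  linarith

lemma div_prod_rpow_eq_exp_jensenGap {f : ℝ → ℝ} (hS : 0 < f (∑ i, p i * x i))
    (hx : ∀ i, 0 < f (x i)) :
    f (∑ i, p i * x i) / ∏ i, f (x i) ^ p i = exp (jensenGap p x fun y => log (f y)) := by
  rw [jensenGap, exp_sub, exp_log hS, exp_sum]
  congr 1
  refine Finset.prod_congr rfl fun i _ => ?_
  rw [rpow_def_of_pos (hx i), mul_comm]

lemma rpow_div_prod_rpow_mul_exp_eq_exp_jensenGap (b e D : ℝ → ℝ) (c : ℝ)
    (hS : 0 < b (∑ i, p i * x i)) (hx : ∀ i, 0 < b (x i)) :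
    (b (∑ i, p i * x i) ^ e (∑ i, p i * x i) / ∏ i, b (x i) ^ (p i * e (x i))) *
        exp ((D (∑ i, p i * x i) - ∑ i, p i * D (x i)) / c) =
      exp (jensenGap p x fun y => log (b y) * e y + D y / c) := by
  have hprod : ∏ i, b (x i) ^ (p i * e (x i)) = exp (∑ i, log (b (x i)) * (p i * e (x i))) := by
    rw [exp_sum]
    exact Finset.prod_congr rfl fun i _ => rpow_def_of_pos (hx i) _
  have hsum : ∑ i, p i * (log (b (x i)) * e (x i) + D (x i) / c) =
      ∑ i, log (b (x i)) * (p i * e (x i)) + (∑ i, p i * D (x i)) / c := by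
    rw [Finset.sum_div, ← Finset.sum_add_distrib]
    exact Finset.sum_congr rfl fun i _ => by ring
  rw [hprod, jensenGap, rpow_def_of_pos hS, ← exp_sub, ← exp_add, hsum]
  ring_nf

end JensenGap

end QGammaJensen

open QGammaJensen

theorem qGamma_jensen_two_sided_general (q : ℝ) (hq0 : 0 < q) (hq1 : q < 1)
    (n : ℕ) (x p : Fin n → ℝ)
    (hx : ∀ k, 0 < x k) (hp : ∀ k, 0 ≤ p k) (hps : ∑ k, p k = 1) :
    (((1 - q ^ (∑ k, p k * x k)) / (1 - q)) ^ (∑ k, p k * x k) /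
          ∏ k, ((1 - q ^ (x k)) / (1 - q)) ^ (p k * x k)) *
        Real.exp ((dilog (1 - q ^ (∑ k, p k * x k)) - ∑ k, p k * dilog (1 - q ^ (x k))) /
          Real.log q)
      ≤ qGamma q ((∑ k, p k * x k) + 1) / ∏ k, (qGamma q (x k + 1)) ^ (p k) ∧
    qGamma q ((∑ k, p k * x k) + 1) / ∏ k, (qGamma q (x k + 1)) ^ (p k)
      ≤ (((1 - q ^ (∑ k, p k * x k)) / (1 - q)) ^ ((∑ k, p k * x k) + 1 / 2) /
          ∏ k, ((1 - q ^ (x k)) / (1 - q)) ^ (p k * (x k + 1 / 2))) *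
        Real.exp ((dilog (1 - q ^ (∑ k, p k * x k)) - ∑ k, p k * dilog (1 - q ^ (x k))) /
          Real.log q) := by
  have hS : 0 < ∑ k, p k * x k := by
    simpa only [smul_eq_mul, mem_Ioi] using
      (convex_Ioi (0 : ℝ)).sum_mem (t := Finset.univ) (fun k _ => hp k) hps fun k _ => hx k
  have hbase : ∀ y : ℝ, 0 < y → 0 < (1 - q ^ y) / (1 - q) := fun y hy =>
    div_pos (sub_pos.2 (rpow_lt_one hq0.le hq1 hy)) (sub_pos.2 hq1)
  have hqGamma : ∀ y : ℝ, 0 < y → 0 < qGamma q (y + 1) := fun y hy => by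
    rw [qGamma_add_one_eq_exp hq0 hq1 (by linarith)]
    exact exp_pos _
  rw [rpow_div_prod_rpow_mul_exp_eq_exp_jensenGap (p := p) (x := x)
      (fun y => (1 - q ^ y) / (1 - q)) (fun y => y) (fun y => dilog (1 - q ^ y))
      (log q) (hbase _ hS) (fun k => hbase _ (hx k)),
    rpow_div_prod_rpow_mul_exp_eq_exp_jensenGap (p := p) (x := x)
      (fun y => (1 - q ^ y) / (1 - q)) (fun y => y + 1 / 2) (fun y => dilog (1 - q ^ y))
      (log q) (hbase _ hS) (fun k => hbase _ (hx k)),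
    div_prod_rpow_eq_exp_jensenGap (f := fun y => qGamma q (y + 1)) (hqGamma _ hS)
      (fun k => hqGamma _ (hx k)), exp_le_exp, exp_le_exp]
  exact ⟨jensenGap_le_of_convexOn_sub (convexOn_qStirlingLower_sub_log_qGamma hq0 hq1) hp hps hx,
    jensenGap_le_of_convexOn_sub (convexOn_log_qGamma_sub_qStirlingUpper hq0 hq1) hp hps hx⟩

/-- Two-sided Jensen-type inequality for `Γ_q(·+1)`: for `0 < q < 1`, weights
`p k ≥ 0` summing to `1` and points `x k > 0`, with `S = Σ p k * x k` and
`E = exp((Li₂(1−q^S) − Σ p k Li₂(1−q^(x k)))/log q)`,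
`[((1−q^S)/(1−q))^S / ∏ ((1−q^(x k))/(1−q))^(p k x k)]·E ≤ Γ_q(S+1)/∏ Γ_q(x k+1)^(p k)
≤ [((1−q^S)/(1−q))^(S+1/2) / ∏ ((1−q^(x k))/(1−q))^(p k (x k+1/2))]·E`. -/
theorem qGamma_jensen_two_sided (q : ℝ) (hq0 : 0 < q) (hq1 : q < 1)
    (n : ℕ) (hn : 1 ≤ n) (x p : Fin n → ℝ)
    (hx : ∀ k, 0 < x k) (hp : ∀ k, 0 ≤ p k) (hps : ∑ k, p k = 1) :
    (((1 - q ^ (∑ k, p k * x k)) / (1 - q)) ^ (∑ k, p k * x k) /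
          ∏ k, ((1 - q ^ (x k)) / (1 - q)) ^ (p k * x k)) *
        Real.exp ((dilog (1 - q ^ (∑ k, p k * x k)) - ∑ k, p k * dilog (1 - q ^ (x k))) /
          Real.log q)
      ≤ qGamma q ((∑ k, p k * x k) + 1) / ∏ k, (qGamma q (x k + 1)) ^ (p k) ∧
    qGamma q ((∑ k, p k * x k) + 1) / ∏ k, (qGamma q (x k + 1)) ^ (p k)
      ≤ (((1 - q ^ (∑ k, p k * x k)) / (1 - q)) ^ ((∑ k, p k * x k) + 1 / 2) /
          ∏ k, ((1 - q ^ (x k)) / (1 - q)) ^ (p k * (x k + 1 / 2))) *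
        Real.exp ((dilog (1 - q ^ (∑ k, p k * x k)) - ∑ k, p k * dilog (1 - q ^ (x k))) /
          Real.log q) :=
  qGamma_jensen_two_sided_general q hq0 hq1 n x p hx hp hps
end

section
/- Let 0<q<1 and x≥1. Write E = exp( −Li₂(1−q)/log q ) · exp( Li₂(1−q^x)/log q ). Then ((1−q^x)/(1−q))^{x} · E ≤ Γ_q(x+1) ≤ ((1−q^x)/(1−q))^{x+1/2} · E. -/
/-!
With `f t = log (1 - q ^ t)`, the product defining `Γ_q` gives
`log Γ_q (x + 1) = -x f 1 + ∑ₖ (f (k + 1) - f (k + x + 1))`, while the substitution `t = 1 - q ^ s`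
and an integration by parts give `(Li₂ (1 - q ^ x) - Li₂ (1 - q)) / log q = f 1 - x f x + ∫₁ˣ f`.
So the claim is that the series lies between `f 1 + ∫₁ˣ f` and that plus `(f x - f 1) / 2`.
Since `f'` is positive, decreasing and convex on `(0, ∞)`, the mean value theorem and the trapezoid
rule give `f' (t + 1) ≤ f (t + 1) - f t ≤ (f' t + f' (t + 1)) / 2`. Integrating this over
`t ∈ [1 + k, x + k]` and summing over `k`, all the error terms telescope.
-/

open Real Set Filter Topology intervalIntegral

section SumIntegralComparison

variable {f f' : ℝ → ℝ}

lemma deriv_add_one_le_sub_of_antitoneOn {a : ℝ}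
    (hf : ∀ t ∈ Icc a (a + 1), HasDerivAt f (f' t) t)
    (hf' : AntitoneOn f' (Icc a (a + 1))) : f' (a + 1) ≤ f (a + 1) - f a := by
  obtain ⟨c, hc, hslope⟩ := exists_hasDerivAt_eq_slope f f' (lt_add_one a)
    (fun t ht => (hf t ht).continuousAt.continuousWithinAt)
    fun t ht => hf t (Ioo_subset_Icc_self ht)
  rw [add_sub_cancel_left, div_one] at hslope
  exact hslope ▸ hf' (Ioo_subset_Icc_self hc) (right_mem_Icc.2 (by linarith)) hc.2.le

lemma sub_le_average_deriv_of_convexOn {a : ℝ}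
    (hf : ∀ t ∈ Icc a (a + 1), HasDerivAt f (f' t) t)
    (hf' : ConvexOn ℝ (Icc a (a + 1)) f') (hf'c : ContinuousOn f' (Icc a (a + 1))) :
    f (a + 1) - f a ≤ (f' a + f' (a + 1)) / 2 := by
  have hchord : ∀ t ∈ Icc a (a + 1), f' t ≤ (a + 1 - t) * f' a + (t - a) * f' (a + 1) := by
    intro t ht
    have := hf'.2 (left_mem_Icc.2 (by linarith)) (right_mem_Icc.2 (by linarith))
      (sub_nonneg.2 ht.2) (sub_nonneg.2 ht.1) (by ring)
    simpa [smul_eq_mul, show (a + 1 - t) * a + (t - a) * (a + 1) = t by ring] using this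
  have hle : a ≤ a + 1 := by linarith
  have hint : ∀ g : ℝ → ℝ, Continuous g →
      IntervalIntegrable g MeasureTheory.volume a (a + 1) :=
    fun g hg => hg.intervalIntegrable _ _
  rw [← integral_eq_sub_of_hasDerivAt (by rwa [uIcc_of_le hle])
    (hf'c.intervalIntegrable_of_Icc hle)]
  calc ∫ t in a..a + 1, f' t
      ≤ ∫ t in a..a + 1, ((a + 1 - t) * f' a + (t - a) * f' (a + 1)) :=
        integral_mono_on hle (hf'c.intervalIntegrable_of_Icc hle) (hint _ (by fun_prop)) hchord
    _ = (f' a + f' (a + 1)) / 2 := by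
        rw [integral_add (hint _ (by fun_prop)) (hint _ (by fun_prop)), integral_mul_const,
          integral_mul_const, integral_comp_sub_left (fun t => t),
          integral_comp_sub_right (fun t => t)]
        simp only [sub_self, add_sub_cancel_left, integral_id, one_pow, ne_eq,
          OfNat.ofNat_ne_zero, not_false_eq_true, zero_pow, sub_zero, one_div]
        ring

lemma tendsto_integral_comp_add_atTop (hf : Tendsto f atTop (𝓝 0)) (a b : ℝ) :
    Tendsto (fun c => ∫ s in a..b, f (s + c)) atTop (𝓝 0) := by
  rw [Metric.tendsto_nhds]
  intro ε hε
  have hδ : 0 < ε / (|b - a| + 1) := by positivity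
  obtain ⟨T, hT⟩ := eventually_atTop.1 (Metric.tendsto_nhds.1 hf _ hδ)
  filter_upwards [eventually_ge_atTop (T - min a b)] with c hc
  have hbound : ∀ s ∈ uIoc a b, ‖f (s + c)‖ ≤ ε / (|b - a| + 1) := by
    intro s hs
    have hs' : min a b ≤ s := (Ioc_subset_Icc_self hs).1
    simpa using (hT (s + c) (by linarith)).le
  calc dist (∫ s in a..b, f (s + c)) 0 ≤ ε / (|b - a| + 1) * |b - a| := by
        simpa using norm_integral_le_of_norm_le_const hbound
    _ < ε := by
        rw [div_mul_eq_mul_div, div_lt_iff₀ (by positivity)]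
        nlinarith [abs_nonneg (b - a)]

lemma exists_hasSum_of_telescoping_bounds {u H P : ℕ → ℝ} (hu : Monotone u)
    (hu0 : Tendsto u atTop (𝓝 0)) (hH : Tendsto H atTop (𝓝 0)) (hP : Tendsto P atTop (𝓝 0))
    (hlow : ∀ k, P (k + 1) ≤ H (k + 1) - H k)
    (hupp : ∀ k, H (k + 1) - H k ≤ (P k + P (k + 1)) / 2) :
    ∃ S, HasSum (fun k => u k - u (k + 1) - P (k + 1)) S ∧
      u 0 + H 0 ≤ S ∧ S ≤ u 0 + H 0 + P 0 / 2 := by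
  have hP_nonneg : ∀ k, 0 ≤ P k :=
    (antitone_nat_of_succ_le fun k => by linarith [hlow k, hupp k]).le_of_tendsto hP
  have hH_nonpos : ∀ k, H k ≤ 0 :=
    (monotone_nat_of_le_succ fun k => by linarith [hlow k, hP_nonneg (k + 1)]).ge_of_tendsto hH
  have hu_nonpos : ∀ k, u k ≤ 0 := hu.ge_of_tendsto hu0
  have hpartial : ∀ n, ∑ k ∈ Finset.range n, (u k - u (k + 1) - P (k + 1)) =
      u 0 - u n - ∑ k ∈ Finset.range n, P (k + 1) := by
    intro n
    rw [Finset.sum_sub_distrib, Finset.sum_range_sub']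
  have hsumP_le : ∀ n, ∑ k ∈ Finset.range n, P (k + 1) ≤ H n - H 0 := by
    intro n
    rw [← Finset.sum_range_sub]
    exact Finset.sum_le_sum fun k _ => hlow k
  have hsumP_ge : ∀ n, H n - H 0 - (P 0 - P n) / 2 ≤ ∑ k ∈ Finset.range n, P (k + 1) := by
    intro n
    have : H n - H 0 - (P 0 - P n) / 2 =
        ∑ k ∈ Finset.range n, (H (k + 1) - H k - (P k - P (k + 1)) / 2) := by
      rw [Finset.sum_sub_distrib, Finset.sum_range_sub, ← Finset.sum_div, Finset.sum_range_sub']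
    rw [this]
    exact Finset.sum_le_sum fun k _ => by linarith [hupp k]
  have hsummable : Summable fun k => u k - u (k + 1) - P (k + 1) := by
    rw [← summable_neg_iff]
    refine summable_of_sum_range_le (c := -(u 0 + H 0)) (fun k => ?_) fun n => ?_
    · linarith [hu (Nat.le_succ k), hP_nonneg (k + 1)]
    · rw [Finset.sum_neg_distrib, hpartial]
      linarith [hsumP_le n, hu_nonpos n, hH_nonpos n]
  refine ⟨_, hsummable.hasSum, ?_, ?_⟩
  · refine ge_of_tendsto' hsummable.hasSum.tendsto_sum_nat fun n => ?_
    rw [hpartial]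
    linarith [hsumP_le n, hu_nonpos n, hH_nonpos n]
  · have hlim : Tendsto (fun n => u 0 + H 0 + P 0 / 2 - (u n + H n + P n / 2)) atTop
        (𝓝 (u 0 + H 0 + P 0 / 2)) := by
      simpa using
        (tendsto_const_nhds (x := u 0 + H 0 + P 0 / 2)).sub ((hu0.add hH).add (hP.div_const 2))
    refine le_of_tendsto_of_tendsto' hsummable.hasSum.tendsto_sum_nat hlim fun n => ?_
    rw [hpartial]
    linarith [hsumP_ge n]

lemma integral_comp_add_sub_bounds (hf : ∀ t, 0 < t → HasDerivAt f (f' t) t)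
    (hf'_anti : AntitoneOn f' (Ioi 0)) (hf'_conv : ConvexOn ℝ (Ioi 0) f') {x c : ℝ}
    (hx : 1 ≤ x) (hc : 0 ≤ c) :
    f (x + (c + 1)) - f (1 + (c + 1)) ≤
        (∫ s in (1:ℝ)..x, f (s + (c + 1))) - ∫ s in (1:ℝ)..x, f (s + c) ∧
      (∫ s in (1:ℝ)..x, f (s + (c + 1))) - ∫ s in (1:ℝ)..x, f (s + c) ≤
        (f (x + c) - f (1 + c) + (f (x + (c + 1)) - f (1 + (c + 1)))) / 2 := by
  have hf'c : ContinuousOn f' (Ioi 0) := hf'_conv.continuousOn isOpen_Ioi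
  have hIcc : ∀ {a : ℝ}, 0 < a → Icc a (a + 1) ⊆ Ioi 0 := fun ha t ht => ha.trans_le ht.1
  have hpos : ∀ {d}, 0 ≤ d → ∀ s ∈ uIcc 1 x, 0 < s + d := fun hd s hs => by
    rw [uIcc_of_le hx] at hs; linarith [hs.1]
  have hint : ∀ {g : ℝ → ℝ}, ContinuousOn g (Ioi 0) → ∀ d, 0 ≤ d →
      IntervalIntegrable (fun s => g (s + d)) MeasureTheory.volume 1 x := fun hg d hd =>
    (hg.comp (continuous_add_const _).continuousOn fun s hs => hpos hd s hs).intervalIntegrable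
  have hfint := hint (g := f) fun t ht => (hf t ht).continuousAt.continuousWithinAt
  have hf'int := hint hf'c
  have hFTC : ∀ d, 0 ≤ d → ∫ s in (1:ℝ)..x, f' (s + d) = f (x + d) - f (1 + d) := by
    intro d hd
    rw [integral_comp_add_right f']
    have hpos' : ∀ t ∈ uIcc (1 + d) (x + d), 0 < t := fun t ht => by
      rw [uIcc_of_le (by linarith)] at ht; linarith [ht.1]
    exact integral_eq_sub_of_hasDerivAt (fun t ht => hf t (hpos' t ht))
      (ContinuousOn.intervalIntegrable (hf'c.mono hpos'))
  have hc1 : 0 ≤ c + 1 := by linarith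
  rw [← integral_sub (hfint _ hc1) (hfint _ hc), ← hFTC _ hc, ← hFTC _ hc1,
    ← integral_add (hf'int _ hc) (hf'int _ hc1), ← integral_div]
  constructor
  · refine integral_mono_on hx (hf'int _ hc1) ((hfint _ hc1).sub (hfint _ hc)) fun s hs => ?_
    have hs0 : 0 < s + c := hpos hc s (by rwa [uIcc_of_le hx])
    rw [← add_assoc]
    exact deriv_add_one_le_sub_of_antitoneOn (fun t ht => hf t (hIcc hs0 ht))
      (hf'_anti.mono (hIcc hs0))
  · refine integral_mono_on hx ((hfint _ hc1).sub (hfint _ hc))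
      (((hf'int _ hc).add (hf'int _ hc1)).div_const 2) fun s hs => ?_
    have hs0 : 0 < s + c := hpos hc s (by rwa [uIcc_of_le hx])
    rw [← add_assoc]
    exact sub_le_average_deriv_of_convexOn (fun t ht => hf t (hIcc hs0 ht))
      (hf'_conv.subset (hIcc hs0) (convex_Icc _ _)) (hf'c.mono (hIcc hs0))

theorem exists_hasSum_sub_shift_bounds (hf : ∀ t, 0 < t → HasDerivAt f (f' t) t)
    (hf'_nonneg : ∀ t, 0 < t → 0 ≤ f' t) (hf'_anti : AntitoneOn f' (Ioi 0))
    (hf'_conv : ConvexOn ℝ (Ioi 0) f') (hf_lim : Tendsto f atTop (𝓝 0)) {x : ℝ}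
    (hx : 1 ≤ x) :
    ∃ S, HasSum (fun k : ℕ => f (k + 1) - f (k + (x + 1))) S ∧
      f 1 + ∫ s in (1:ℝ)..x, f s ≤ S ∧
      S ≤ f 1 + (∫ s in (1:ℝ)..x, f s) + (f x - f 1) / 2 := by
  have hmono : Monotone fun k : ℕ => f (k + 1) := monotone_nat_of_le_succ fun k => by
    have hk : (0:ℝ) < k + 1 := by positivity
    have := deriv_add_one_le_sub_of_antitoneOn (fun t ht => hf t (hk.trans_le ht.1))
      (hf'_anti.mono fun t ht => hk.trans_le ht.1)
    push_cast
    linarith [hf'_nonneg _ (hk.trans (lt_add_one _))]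
  have hlim_add : ∀ c, Tendsto (fun k : ℕ => f (c + k)) atTop (𝓝 0) := fun c =>
    hf_lim.comp (tendsto_atTop_add_const_left _ c tendsto_natCast_atTop_atTop)
  obtain ⟨S, hS, hlow, hupp⟩ := exists_hasSum_of_telescoping_bounds hmono
    (H := fun k : ℕ => ∫ s in (1:ℝ)..x, f (s + k)) (P := fun k : ℕ => f (x + k) - f (1 + k))
    (by simpa only [add_comm] using hlim_add 1)
    ((tendsto_integral_comp_add_atTop hf_lim 1 x).comp tendsto_natCast_atTop_atTop)
    (by simpa using (hlim_add x).sub (hlim_add 1))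
    (fun k => by
      exact_mod_cast (integral_comp_add_sub_bounds hf hf'_anti hf'_conv hx k.cast_nonneg).1)
    (fun k => by
      exact_mod_cast (integral_comp_add_sub_bounds hf hf'_anti hf'_conv hx k.cast_nonneg).2)
  refine ⟨S, hS.congr_fun fun k => ?_, by simpa using hlow, by simpa using hupp⟩
  push_cast
  rw [show (k : ℝ) + (x + 1) = x + (k + 1) by ring, show (k : ℝ) + 1 + 1 = 1 + (k + 1) by ring]
  ring

end SumIntegralComparison

lemma hasDerivAt_log_one_sub_rpow {q : ℝ} (hq0 : 0 < q) {t : ℝ} (ht : q ^ t < 1) :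
    HasDerivAt (fun s => log (1 - q ^ s)) (-log q * (q ^ t / (1 - q ^ t))) t := by
  convert ((hasStrictDerivAt_const_rpow hq0 t).hasDerivAt.const_sub 1).log (by linarith) using 1
  field_simp

lemma convexOn_rpow_div_one_sub_rpow {q : ℝ} (hq0 : 0 < q) (hq1 : q < 1) :
    ConvexOn ℝ (Ioi 0) fun t : ℝ => q ^ t / (1 - q ^ t) := by
  -- `q ^ t / (1 - q ^ t) = (1 - q ^ t)⁻¹ - 1`, and the inverse of a positive concave map is convex
  have hpos : ∀ t ∈ Ioi (0:ℝ), 0 < 1 - q ^ t := fun t ht =>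
    sub_pos.2 (rpow_lt_one hq0.le hq1 ht)
  have hconc : ConcaveOn ℝ (Ioi 0) fun t : ℝ => 1 - q ^ t :=
    (concaveOn_const 1 (convex_Ioi 0)).sub
      ((convexOn_rpow_left hq0).subset (subset_univ _) (convex_Ioi 0))
  have himage : (fun t : ℝ => 1 - q ^ t) '' Ioi 0 ⊆ Ioi 0 := by
    rintro _ ⟨t, ht, rfl⟩; exact hpos t ht
  have hinv : ConvexOn ℝ ((fun t : ℝ => 1 - q ^ t) '' Ioi 0) fun y : ℝ => y⁻¹ := by
    refine ((convexOn_zpow (-1)).subset himage ?_).congr fun y _ => zpow_neg_one y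
    exact (isPreconnected_Ioi.image _ (continuous_const.sub
      (continuous_const_rpow hq0.ne')).continuousOn).ordConnected.convex
  refine ((hinv.comp_concaveOn hconc fun y hy z hz hyz => inv_anti₀ (himage hy) hyz).add_const
    (-1)).congr fun t ht => ?_
  simp only [Pi.add_apply, Function.comp_apply]
  field_simp [(hpos t ht).ne']
  ring

lemma antitoneOn_rpow_div_one_sub_rpow {q : ℝ} (hq0 : 0 < q) (hq1 : q < 1) :
    AntitoneOn (fun t : ℝ => q ^ t / (1 - q ^ t)) (Ioi 0) := by
  intro s hs t ht hst
  have hqt : q ^ t ≤ q ^ s := rpow_le_rpow_of_exponent_ge hq0 hq1.le hst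
  have hqs : q ^ s < 1 := rpow_lt_one hq0.le hq1 hs
  have hqt1 : q ^ t < 1 := rpow_lt_one hq0.le hq1 ht
  rw [div_le_div_iff₀ (sub_pos.2 hqt1) (sub_pos.2 hqs)]
  nlinarith

lemma tendsto_log_one_sub_rpow_atTop {q : ℝ} (hq0 : 0 < q) (hq1 : q < 1) :
    Tendsto (fun t : ℝ => log (1 - q ^ t)) atTop (𝓝 0) := by
  have hlog : ContinuousAt (fun y => log (1 - y)) 0 :=
    (continuousAt_const.sub continuousAt_id).log (by norm_num)
  simpa [Function.comp_def] using
    hlog.tendsto.comp (tendsto_rpow_atTop_of_base_lt_one q (by linarith) hq1)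

lemma intervalIntegrable_log_one_sub_div_s15 {c : ℝ} (hc0 : 0 ≤ c) (hc1 : c < 1) :
    IntervalIntegrable (fun t => log (1 - t) / t) MeasureTheory.volume 0 c := by
  refine (intervalIntegrable_const (c := (1 - c)⁻¹)).mono_fun'
    ((measurable_log.comp (measurable_const.sub measurable_id)).div
      measurable_id).aestronglyMeasurable ?_
  rw [uIoc_of_le hc0, Filter.EventuallyLE,
    MeasureTheory.ae_restrict_iff' measurableSet_Ioc]
  refine Eventually.of_forall fun t ⟨ht0, htc⟩ => ?_
  have h1t : 0 < 1 - t := by linarith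
  have hlog_le : log (1 - t) ≤ 0 := log_nonpos h1t.le (by linarith)
  have hlog_ge : -(t / (1 - t)) ≤ log (1 - t) := by
    have := one_sub_inv_le_log_of_pos h1t
    rwa [show 1 - (1 - t)⁻¹ = -(t / (1 - t)) by field_simp; ring] at this
  rw [norm_div, norm_of_nonpos hlog_le, norm_of_nonneg ht0.le, div_le_iff₀ ht0]
  calc -log (1 - t) ≤ t / (1 - t) := by linarith
    _ ≤ (1 - c)⁻¹ * t := by
      rw [div_eq_inv_mul]
      gcongr

lemma dilog_one_sub_rpow_sub_dilog {q : ℝ} (hq0 : 0 < q) (hq1 : q < 1) {x : ℝ} (hx : 0 < x) :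
    dilog (1 - q ^ x) - dilog (1 - q) =
      log q * (log (1 - q) - x * log (1 - q ^ x) + ∫ s in (1:ℝ)..x, log (1 - q ^ s)) := by
  have hcq : Continuous fun s : ℝ => q ^ s := continuous_const_rpow hq0.ne'
  have hlt : ∀ s ∈ uIcc 1 x, q ^ s < 1 := fun s hs =>
    rpow_lt_one hq0.le hq1 (lt_of_lt_of_le (lt_min one_pos hx) hs.1)
  have hsubst := integral_comp_mul_deriv' (g := fun t => log (1 - t) / t)
    (fun s _ => (hasStrictDerivAt_const_rpow hq0 s).hasDerivAt.const_sub 1)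
    ((hcq.mul continuous_const).neg.continuousOn) (by
      rintro _ ⟨s, hs, rfl⟩
      have hqs := rpow_pos_of_pos hq0 s
      exact (((continuousAt_const.sub continuousAt_id).log (by simp [hqs.ne'])).div
        continuousAt_id (sub_pos.2 (hlt s hs)).ne').continuousWithinAt)
  simp only [rpow_one] at hsubst
  have hintegrand : EqOn (fun s => log (1 - (1 - q ^ s)) / (1 - q ^ s) * -(q ^ s * log q))
      (fun s => log q * (s * (-log q * (q ^ s / (1 - q ^ s))))) (uIcc 1 x) := fun s _ => by
    simp only [sub_sub_cancel, log_rpow hq0]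
    ring
  have hparts := integral_mul_deriv_eq_deriv_mul (fun s _ => hasDerivAt_id s)
    (fun s hs => hasDerivAt_log_one_sub_rpow hq0 (hlt s hs)) intervalIntegrable_const
    (ContinuousOn.intervalIntegrable (continuousOn_const.mul (hcq.continuousOn.div
      (continuousOn_const.sub hcq.continuousOn) fun s hs => (sub_pos.2 (hlt s hs)).ne')))
  have h1q : 1 - q ^ x < 1 := by linarith [rpow_pos_of_pos hq0 x]
  calc dilog (1 - q ^ x) - dilog (1 - q)
      = -∫ t in (1 - q)..(1 - q ^ x), log (1 - t) / t := by
        rw [dilog, dilog, ← integral_interval_sub_left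
          (intervalIntegrable_log_one_sub_div_s15 (sub_pos.2 (hlt x right_mem_uIcc)).le h1q)
          (intervalIntegrable_log_one_sub_div_s15 (sub_pos.2 hq1).le (by linarith))]
        ring
    _ = -∫ s in (1:ℝ)..x, log q * (s * (-log q * (q ^ s / (1 - q ^ s)))) := by
        rw [← hsubst]
        exact congrArg Neg.neg (integral_congr hintegrand)
    _ = _ := by
        simp only [id, one_mul, rpow_one] at hparts
        rw [integral_const_mul, hparts]
        ring

lemma qGamma_eq_exp_of_hasSum {q : ℝ} (hq0 : 0 < q) (hq1 : q < 1) {y S : ℝ} (hy : 0 < y)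
    (hS : HasSum (fun k : ℕ => log (1 - q ^ ((k : ℝ) + 1)) - log (1 - q ^ ((k : ℝ) + y))) S) :
    qGamma q y = exp ((1 - y) * log (1 - q) + S) := by
  have hnum : ∀ j : ℕ, (1 : ℝ) - q ^ (j + 1) = 1 - q ^ ((j : ℝ) + 1) := fun j => by
    rw [← rpow_natCast]; push_cast; rfl
  have hpos : ∀ {t : ℝ}, 0 < t → 0 < 1 - q ^ t := fun ht =>
    sub_pos.2 (rpow_lt_one hq0.le hq1 ht)
  have hprod := hasProd_of_hasSum_log
    (f := fun j : ℕ => (1 - q ^ (j + 1)) / (1 - q ^ ((j : ℝ) + y)))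
    (fun j => by rw [hnum]; exact div_pos (hpos (by positivity)) (hpos (by positivity)))
    (hS.congr_fun fun j => by
      rw [hnum, log_div (hpos (by positivity)).ne' (hpos (by positivity)).ne'])
  rw [qGamma, hprod.tprod_eq, rpow_def_of_pos (sub_pos.2 hq1), exp_add, mul_comm (1 - y)]

/-- For `0 < q < 1` and `x ≥ 1`, with
`E = exp(−Li₂(1−q)/log q)·exp(Li₂(1−q^x)/log q)`,
`((1−q^x)/(1−q))^x · E ≤ Γ_q(x+1) ≤ ((1−q^x)/(1−q))^(x+1/2) · E`. -/
theorem qGamma_bounds (q x : ℝ) (hq0 : 0 < q) (hq1 : q < 1) (hx : 1 ≤ x) :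
    ((1 - q ^ x) / (1 - q)) ^ x *
        (Real.exp (-dilog (1 - q) / Real.log q) * Real.exp (dilog (1 - q ^ x) / Real.log q))
      ≤ qGamma q (x + 1) ∧
    qGamma q (x + 1)
      ≤ ((1 - q ^ x) / (1 - q)) ^ (x + 1 / 2) *
        (Real.exp (-dilog (1 - q) / Real.log q) * Real.exp (dilog (1 - q ^ x) / Real.log q)) := by
  have hlogq : 0 ≤ -log q := neg_nonneg.2 (log_nonpos hq0.le hq1.le)
  have hlt : ∀ t : ℝ, 0 < t → q ^ t < 1 := fun t ht => rpow_lt_one hq0.le hq1 ht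
  obtain ⟨S, hS, hlow, hupp⟩ := exists_hasSum_sub_shift_bounds
    (fun t ht => hasDerivAt_log_one_sub_rpow hq0 (hlt t ht))
    (fun t ht => mul_nonneg hlogq (div_nonneg (rpow_pos_of_pos hq0 t).le (sub_pos.2 (hlt t ht)).le))
    (fun s hs t ht hst => mul_le_mul_of_nonneg_left
      (antitoneOn_rpow_div_one_sub_rpow hq0 hq1 hs ht hst) hlogq)
    ((convexOn_rpow_div_one_sub_rpow hq0 hq1).smul hlogq) (tendsto_log_one_sub_rpow_atTop hq0 hq1)
    hx
  have hE : exp (-dilog (1 - q) / log q) * exp (dilog (1 - q ^ x) / log q) =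
      exp (log (1 - q) - x * log (1 - q ^ x) + ∫ s in (1:ℝ)..x, log (1 - q ^ s)) := by
    rw [← exp_add, neg_div, neg_add_eq_sub, ← sub_div, dilog_one_sub_rpow_sub_dilog hq0 hq1
      (by linarith), mul_div_cancel_left₀ _ (log_neg hq0 hq1).ne]
  have hqx : 0 < 1 - q ^ x := sub_pos.2 (hlt x (by linarith))
  have hbase : ∀ y, ((1 - q ^ x) / (1 - q)) ^ y = exp ((log (1 - q ^ x) - log (1 - q)) * y) :=
    fun y => by rw [rpow_def_of_pos (div_pos hqx (sub_pos.2 hq1)),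
      log_div hqx.ne' (sub_pos.2 hq1).ne']
  rw [hE, hbase, hbase, qGamma_eq_exp_of_hasSum hq0 hq1 (by linarith) hS, ← exp_add, ← exp_add,
    exp_le_exp, exp_le_exp]
  simp only [rpow_one] at hlow hupp
  constructor <;> linarith
end

section
/- Let a, b be real numbers with 0<a<b. Then (b^{b−1}/a^{a−1})·e^{a−b} < Γ(b)/Γ(a) < (b^{b−1/2}/a^{a−1/2})·e^{a−b}, where Γ is the Euler gamma function. -/
/-!
Write `Γ x = x ^ (x - c) * exp (-x) * exp (D_c x)`, where `D_c = stirlingDefect c`. The two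
bounds say that `D_1` is strictly increasing and `D_{1/2}` strictly decreasing on `(0, ∞)`.
The increment `D_c (x + 1) - D_c x = 1 - (x + 1 - c) * log (1 + 1/x)` is strictly decreasing
for `c = 1` (from `log t > 1 - 1/t`) and strictly increasing for `c = 1/2` (from
`log t < sinh (log t)`). Hence `D_c (b + n) - D_c (a + n)` is strictly monotone in `n`; by the
Euler limit formula for `Γ` it tends to `0`, which forces the sign of `D_c b - D_c a`.
-/

open Real Filter Topology Set

lemma one_sub_inv_lt_log {t : ℝ} (ht : 1 < t) : 1 - t⁻¹ < log t := by
  have h := log_lt_sub_one_of_pos (inv_pos.2 (zero_lt_one.trans ht)) (inv_ne_one.2 ht.ne')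
  rw [log_inv] at h
  linarith

lemma log_lt_sub_inv_div_two {t : ℝ} (ht : 1 < t) : log t < (t - t⁻¹) / 2 := by
  rw [← sinh_log (zero_lt_one.trans ht)]
  exact self_lt_sinh_iff.2 (log_pos ht)

lemma hasDerivAt_add_mul_log_add_one_sub_log (d : ℝ) {x : ℝ} (hx : 0 < x) :
    HasDerivAt (fun y => (y + d) * (log (y + 1) - log y))
      (log (x + 1) - log x - (x + d) / (x * (x + 1))) x := by
  have hx1 : x + 1 ≠ 0 := by positivity
  have hlog : HasDerivAt (fun y => log (y + 1)) (x + 1)⁻¹ x := by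
    simpa using ((hasDerivAt_id x).add_const 1).log hx1
  refine (((hasDerivAt_id x).add_const d).mul (hlog.sub (hasDerivAt_log hx.ne'))).congr_deriv ?_
  simp only [Pi.sub_apply, id_eq]
  field_simp
  ring

lemma strictMonoOn_mul_log_add_one_sub_log :
    StrictMonoOn (fun x => x * (log (x + 1) - log x)) (Ioi 0) := by
  have hderiv (x : ℝ) (hx : 0 < x) := by
    simpa only [add_zero] using hasDerivAt_add_mul_log_add_one_sub_log 0 hx
  refine strictMonoOn_of_deriv_pos (convex_Ioi 0)
    (fun x hx => (hderiv x hx).continuousAt.continuousWithinAt) fun x hx => ?_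
  rw [interior_Ioi] at hx
  have hx : 0 < x := hx
  have key := one_sub_inv_lt_log (t := (x + 1) / x) ((one_lt_div hx).2 (by linarith))
  rw [(hderiv x hx).deriv, ← log_div (by positivity) hx.ne']
  have : x / (x * (x + 1)) = 1 - ((x + 1) / x)⁻¹ := by field_simp; ring
  linarith

lemma strictAntiOn_add_half_mul_log_add_one_sub_log :
    StrictAntiOn (fun x => (x + 1 / 2) * (log (x + 1) - log x)) (Ioi 0) := by
  have hderiv (x : ℝ) (hx : 0 < x) := hasDerivAt_add_mul_log_add_one_sub_log (1 / 2) hx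
  refine strictAntiOn_of_deriv_neg (convex_Ioi 0)
    (fun x hx => (hderiv x hx).continuousAt.continuousWithinAt) fun x hx => ?_
  rw [interior_Ioi] at hx
  have hx : 0 < x := hx
  have key := log_lt_sub_inv_div_two (t := (x + 1) / x) ((one_lt_div hx).2 (by linarith))
  rw [(hderiv x hx).deriv, ← log_div (by positivity) hx.ne']
  have : (x + 1 / 2) / (x * (x + 1)) = ((x + 1) / x - ((x + 1) / x)⁻¹) / 2 := by
    field_simp; ring
  linarith

lemma tendsto_add_mul_log_one_add_div (c x : ℝ) :
    Tendsto (fun t : ℝ => (t + c) * log (1 + x / t)) atTop (𝓝 x) := by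
  have hlog : Tendsto (fun t : ℝ => log (1 + x / t)) atTop (𝓝 0) := by
    have h : Tendsto (fun t : ℝ => 1 + x / t) atTop (𝓝 1) := by
      simpa using (tendsto_const_nhds (x := (1 : ℝ))).add
        ((tendsto_const_nhds (x := x)).div_atTop tendsto_id)
    simpa [Function.comp_def] using (continuousAt_log one_ne_zero).tendsto.comp h
  simpa [add_mul] using (tendsto_mul_log_one_add_div_atTop x).add (hlog.const_mul c)

lemma log_Gamma_add_nat {x : ℝ} (hx : 0 < x) (n : ℕ) :
    log (Gamma (x + n)) = log (Gamma x) + ∑ m ∈ Finset.range n, log (x + m) :=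
  BohrMollerup.f_add_nat_eq (f := log ∘ Gamma)
    (fun hy => by
      simp only [Function.comp_apply, Gamma_add_one hy.ne',
        log_mul hy.ne' (Gamma_pos_of_pos hy).ne', add_comm]) hx n

lemma tendsto_log_Gamma_add_nat_sub {a b : ℝ} (ha : 0 < a) (hb : 0 < b) :
    Tendsto (fun n : ℕ => log (Gamma (b + n)) - log (Gamma (a + n)) - (b - a) * log n)
      atTop (𝓝 0) := by
  have hseq (x : ℝ) (hx : 0 < x) (n : ℕ) : log (Gamma (x + n)) - x * log n =
      log (Gamma x) - BohrMollerup.logGammaSeq x n + log n.factorial - log (x + n) := by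
    rw [BohrMollerup.logGammaSeq, Finset.sum_range_succ, log_Gamma_add_nat hx]
    ring
  have heuler (x : ℝ) (hx : 0 < x) :
      Tendsto (fun n : ℕ => log (Gamma x) - BohrMollerup.logGammaSeq x n) atTop (𝓝 0) := by
    simpa using (tendsto_const_nhds (x := log (Gamma x))).sub (BohrMollerup.tendsto_log_gamma hx)
  have hlog (x : ℝ) : Tendsto (fun n : ℕ => log (n + x) - log n) atTop (𝓝 0) :=
    (tendsto_log_comp_add_sub_log x).comp tendsto_natCast_atTop_atTop
  have h := ((heuler b hb).sub (heuler a ha)).sub ((hlog b).sub (hlog a))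
  simp only [sub_zero] at h
  refine h.congr fun n => ?_
  rw [add_comm (n : ℝ) b, add_comm (n : ℝ) a]
  linarith [hseq b hb n, hseq a ha n]

noncomputable def stirlingDefect (c x : ℝ) : ℝ := log (Gamma x) - (x - c) * log x + x

lemma stirlingDefect_add_one_sub (c : ℝ) {x : ℝ} (hx : 0 < x) :
    stirlingDefect c (x + 1) - stirlingDefect c x = 1 - (x + (1 - c)) * (log (x + 1) - log x) := by
  simp only [stirlingDefect, Gamma_add_one hx.ne', log_mul hx.ne' (Gamma_pos_of_pos hx).ne']
  ring

lemma tendsto_stirlingDefect_add_nat_sub (c : ℝ) {a b : ℝ} (ha : 0 < a) (hb : 0 < b) :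
    Tendsto (fun n : ℕ => stirlingDefect c (b + n) - stirlingDefect c (a + n)) atTop (𝓝 0) := by
  have hL (x : ℝ) : Tendsto (fun n : ℕ => ((n : ℝ) + (x - c)) * log (1 + x / n)) atTop (𝓝 x) :=
    (tendsto_add_mul_log_one_add_div (x - c) x).comp tendsto_natCast_atTop_atTop
  have h := ((tendsto_log_Gamma_add_nat_sub ha hb).sub ((hL b).sub (hL a))).add_const (b - a)
  rw [zero_sub, neg_add_cancel] at h
  refine h.congr' ?_
  filter_upwards [eventually_gt_atTop 0] with n hn
  have hn : (0 : ℝ) < n := Nat.cast_pos.2 hn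
  have hsplit (x : ℝ) (hx : 0 < x) : log (x + n) = log n + log (1 + x / n) := by
    rw [← log_mul hn.ne' (by positivity)]
    congr 1
    field_simp
    ring
  simp only [stirlingDefect]
  rw [hsplit b hb, hsplit a ha]
  ring

lemma Gamma_div_Gamma_eq_rpow_div_rpow_mul_exp (c : ℝ) {a b : ℝ} (ha : 0 < a) (hb : 0 < b) :
    Gamma b / Gamma a =
      b ^ (b - c) / a ^ (a - c) * exp (a - b) * exp (stirlingDefect c b - stirlingDefect c a) := by
  rw [← exp_log (Gamma_pos_of_pos hb), ← exp_log (Gamma_pos_of_pos ha), rpow_def_of_pos hb,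
    rpow_def_of_pos ha, ← exp_sub, ← exp_sub, ← exp_add, ← exp_add]
  congr 1
  simp only [stirlingDefect]
  ring

lemma lt_of_strictAntiOn_add_one_sub {φ : ℝ → ℝ} {a b : ℝ}
    (hφ : StrictAntiOn (fun x => φ (x + 1) - φ x) (Ioi 0)) (ha : 0 < a) (hab : a < b)
    (hlim : Tendsto (fun n : ℕ => φ (b + n) - φ (a + n)) atTop (𝓝 0)) : φ a < φ b := by
  have hb : 0 < b := ha.trans hab
  set u : ℕ → ℝ := fun n => φ (b + n) - φ (a + n) with hu_def
  have hu : StrictAnti u := strictAnti_nat_of_succ_lt fun n => by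
    have h := hφ (show 0 < a + n by positivity) (show 0 < b + n by positivity)
      (by linarith : a + n < b + n)
    simp only [hu_def, Nat.cast_succ, ← add_assoc]
    linarith
  have h1 : 0 ≤ u 1 := hu.antitone.le_of_tendsto hlim 1
  have h0 : u 1 < u 0 := hu zero_lt_one
  simp only [hu_def, Nat.cast_zero, add_zero] at h0
  linarith

lemma lt_of_strictMonoOn_add_one_sub {φ : ℝ → ℝ} {a b : ℝ}
    (hφ : StrictMonoOn (fun x => φ (x + 1) - φ x) (Ioi 0)) (ha : 0 < a) (hab : a < b)
    (hlim : Tendsto (fun n : ℕ => φ (b + n) - φ (a + n)) atTop (𝓝 0)) : φ b < φ a := by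
  have hneg : StrictAntiOn (fun x => -φ (x + 1) - -φ x) (Ioi 0) := fun x hx y hy hxy => by
    have := hφ hx hy hxy
    simp only at this ⊢
    linarith
  have := lt_of_strictAntiOn_add_one_sub (φ := fun x => -φ x) hneg ha hab
    (by simpa only [neg_sub_neg, neg_sub, neg_zero] using hlim.neg)
  linarith

lemma strictAntiOn_stirlingDefect_one_add_one_sub :
    StrictAntiOn (fun x => stirlingDefect 1 (x + 1) - stirlingDefect 1 x) (Ioi 0) :=
  fun x hx y hy hxy => by
    have := strictMonoOn_mul_log_add_one_sub_log hx hy hxy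
    simp only [stirlingDefect_add_one_sub 1 hx, stirlingDefect_add_one_sub 1 hy, sub_self,
      add_zero] at this ⊢
    linarith

lemma strictMonoOn_stirlingDefect_half_add_one_sub :
    StrictMonoOn (fun x => stirlingDefect (1 / 2) (x + 1) - stirlingDefect (1 / 2) x) (Ioi 0) :=
  fun x hx y hy hxy => by
    have := strictAntiOn_add_half_mul_log_add_one_sub_log hx hy hxy
    norm_num [stirlingDefect_add_one_sub (1 / 2) hx, stirlingDefect_add_one_sub (1 / 2) hy]
      at this ⊢
    linarith

/-- For `0 < a < b`,
`(b^(b−1)/a^(a−1))·e^(a−b) < Γ(b)/Γ(a) < (b^(b−1/2)/a^(a−1/2))·e^(a−b)`. -/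
theorem gamma_ratio_strict_bounds (a b : ℝ) (ha : 0 < a) (hab : a < b) :
    b ^ (b - 1) / a ^ (a - 1) * Real.exp (a - b) < Real.Gamma b / Real.Gamma a ∧
    Real.Gamma b / Real.Gamma a < b ^ (b - 1 / 2) / a ^ (a - 1 / 2) * Real.exp (a - b) := by
  have hb : 0 < b := ha.trans hab
  have hlower : stirlingDefect 1 a < stirlingDefect 1 b :=
    lt_of_strictAntiOn_add_one_sub strictAntiOn_stirlingDefect_one_add_one_sub ha hab
      (tendsto_stirlingDefect_add_nat_sub 1 ha hb)
  have hupper : stirlingDefect (1 / 2) b < stirlingDefect (1 / 2) a :=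
    lt_of_strictMonoOn_add_one_sub strictMonoOn_stirlingDefect_half_add_one_sub ha hab
      (tendsto_stirlingDefect_add_nat_sub (1 / 2) ha hb)
  constructor
  · rw [Gamma_div_Gamma_eq_rpow_div_rpow_mul_exp 1 ha hb]
    exact lt_mul_of_one_lt_right (by positivity) (one_lt_exp_iff.2 (sub_pos.2 hlower))
  · rw [Gamma_div_Gamma_eq_rpow_div_rpow_mul_exp (1 / 2) ha hb]
    exact mul_lt_of_lt_one_right (by positivity) (exp_lt_one_iff.2 (sub_neg.2 hupper))
end

section
/- Let x, y be positive real numbers. Then ((x+y)/2)^{x+y} / (x^x·y^y) ≤ Γ((x+y+2)/2)² / (Γ(x+1)·Γ(y+1)) ≤ ((x+y)/2)^{x+y+1} / (x^{x+1/2}·y^{y+1/2}), where Γ is the Euler gamma function. -/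
/-!
Write `J f x y = f x + f y - 2 f ((x + y) / 2)` and `L t = log Γ(t + 1)`. After taking logarithms
the bounds read `J F_{1/2} ≤ J L ≤ J F_0` for `F_c t = (t + c) log t`. The increments satisfy
`L (t + 1) - L t = log (t + 1)`, whereas `F_c (t + 1) - F_c t - log (t + 1) = (t + c) log (1 + 1/t)`
is concave for `c ≤ 0` and convex for `c ≥ 1/2`. Telescoping along `x + k, y + k` therefore writes
`J L - J F_c` as a sum of Jensen gaps of one sign, plus the remainder `-J F_c (x + n) (y + n) → 0`.
The telescoping is done on the Bohr–Mollerup approximations of `L`, so no asymptotics of `Γ` are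
needed.
-/

open Real Filter Topology Finset Set

noncomputable def jensenGap (f : ℝ → ℝ) (x y : ℝ) : ℝ := f x + f y - 2 * f ((x + y) / 2)

lemma jensenGap_add_add (f : ℝ → ℝ) (x y a : ℝ) :
    jensenGap f (x + a) (y + a) = f (x + a) + f (y + a) - 2 * f ((x + y) / 2 + a) := by
  rw [jensenGap, show (x + a + (y + a)) / 2 = (x + y) / 2 + a by ring]

lemma ConvexOn.jensenGap_nonneg {s : Set ℝ} {f : ℝ → ℝ} (hf : ConvexOn ℝ s f) {x y : ℝ}
    (hx : x ∈ s) (hy : y ∈ s) : 0 ≤ jensenGap f x y := by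
  have h := hf.2 hx hy (by norm_num : (0 : ℝ) ≤ 1 / 2) (by norm_num : (0 : ℝ) ≤ 1 / 2)
    (by norm_num)
  simp only [smul_eq_mul, show 1 / 2 * x + 1 / 2 * y = (x + y) / 2 by ring] at h
  rw [jensenGap]
  linarith

lemma ConcaveOn.jensenGap_nonpos {s : Set ℝ} {f : ℝ → ℝ} (hf : ConcaveOn ℝ s f)
    {x y : ℝ} (hx : x ∈ s) (hy : y ∈ s) : jensenGap f x y ≤ 0 := by
  have h := hf.neg.jensenGap_nonneg hx hy
  simp only [jensenGap, Pi.neg_apply] at h ⊢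
  linarith

lemma hasDerivAt_log_add_one_sub_log {t : ℝ} (ht : 0 < t) :
    HasDerivAt (fun s => log (s + 1) - log s) ((t + 1)⁻¹ - t⁻¹) t :=
  (((hasDerivAt_id' t).add_const 1).log (by positivity)).sub (hasDerivAt_log ht.ne')
    |>.congr_deriv (by rw [one_div])

lemma hasDerivAt_inv_add_one_sub_inv {t : ℝ} (ht : 0 < t) :
    HasDerivAt (fun s => (s + 1)⁻¹ - s⁻¹) ((t ^ 2)⁻¹ - ((t + 1) ^ 2)⁻¹) t :=
  (((hasDerivAt_id' t).add_const 1).fun_inv (by positivity)).sub (hasDerivAt_inv ht.ne')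
    |>.congr_deriv (by ring)

lemma hasDerivAt_add_mul_log_add_one_sub_log_s19 (c : ℝ) {t : ℝ} (ht : 0 < t) :
    HasDerivAt (fun s => (s + c) * (log (s + 1) - log s))
      (log (t + 1) - log t + (t + c) * ((t + 1)⁻¹ - t⁻¹)) t :=
  ((hasDerivAt_id' t).add_const c).mul (hasDerivAt_log_add_one_sub_log ht) |>.congr_deriv (by ring)

lemma hasDerivAt_deriv_add_mul_log_add_one_sub_log (c : ℝ) {t : ℝ} (ht : 0 < t) :
    HasDerivAt (fun s => log (s + 1) - log s + (s + c) * ((s + 1)⁻¹ - s⁻¹))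
      (((2 * c - 1) * t + c) / (t ^ 2 * (t + 1) ^ 2)) t :=
  (hasDerivAt_log_add_one_sub_log ht).add
    (((hasDerivAt_id' t).add_const c).mul (hasDerivAt_inv_add_one_sub_inv ht)) |>.congr_deriv <| by
    field_simp
    ring

lemma convexOn_add_mul_log_add_one_sub_log {c : ℝ} (hc : 1 / 2 ≤ c) :
    ConvexOn ℝ (Ioi 0) (fun t => (t + c) * (log (t + 1) - log t)) := by
  refine convexOn_of_hasDerivWithinAt2_nonneg (convex_Ioi 0)
    (fun t ht => (hasDerivAt_add_mul_log_add_one_sub_log_s19 c ht).continuousAt.continuousWithinAt)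
    (fun t ht => (hasDerivAt_add_mul_log_add_one_sub_log_s19 c (interior_subset ht)).hasDerivWithinAt)
    (fun t ht =>
      (hasDerivAt_deriv_add_mul_log_add_one_sub_log c (interior_subset ht)).hasDerivWithinAt)
    (fun t ht => ?_)
  have ht : 0 < t := interior_subset ht
  have : 0 ≤ (2 * c - 1) * t + c := by nlinarith
  positivity

lemma concaveOn_add_mul_log_add_one_sub_log {c : ℝ} (hc : c ≤ 0) :
    ConcaveOn ℝ (Ioi 0) (fun t => (t + c) * (log (t + 1) - log t)) := by
  refine concaveOn_of_hasDerivWithinAt2_nonpos (convex_Ioi 0)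
    (fun t ht => (hasDerivAt_add_mul_log_add_one_sub_log_s19 c ht).continuousAt.continuousWithinAt)
    (fun t ht => (hasDerivAt_add_mul_log_add_one_sub_log_s19 c (interior_subset ht)).hasDerivWithinAt)
    (fun t ht =>
      (hasDerivAt_deriv_add_mul_log_add_one_sub_log c (interior_subset ht)).hasDerivWithinAt)
    (fun t ht => ?_)
  have ht : 0 < t := interior_subset ht
  have : (2 * c - 1) * t + c ≤ 0 := by nlinarith
  exact div_nonpos_of_nonpos_of_nonneg this (by positivity)

lemma jensenGap_logGammaSeq_add_one (x y : ℝ) (n : ℕ) :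
    jensenGap (fun t => BohrMollerup.logGammaSeq (t + 1) n) x y =
      -∑ k ∈ range (n + 1), jensenGap log (x + (k + 1)) (y + (k + 1)) := by
  simp only [jensenGap_add_add, sum_sub_distrib, sum_add_distrib, ← mul_sum]
  simp only [jensenGap, BohrMollerup.logGammaSeq, add_comm (1 : ℝ), add_assoc]
  ring

lemma jensenGap_logGammaSeq_add_one_eq (F : ℝ → ℝ) (x y : ℝ) (n : ℕ) :
    jensenGap (fun t => BohrMollerup.logGammaSeq (t + 1) n) x y =
      jensenGap F x y - jensenGap F (x + (n + 1 : ℕ)) (y + (n + 1 : ℕ)) +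
        ∑ k ∈ range (n + 1),
          jensenGap (fun t => F (t + 1) - F t - log (t + 1)) (x + k) (y + k) := by
  have step (k : ℕ) : jensenGap (fun t => F (t + 1) - F t - log (t + 1)) (x + k) (y + k) =
      jensenGap F (x + (k + 1)) (y + (k + 1)) - jensenGap F (x + k) (y + k) -
        jensenGap log (x + (k + 1)) (y + (k + 1)) := by
    simp only [jensenGap_add_add, add_assoc]
    ring
  have telescope := sum_range_sub (fun k : ℕ => jensenGap F (x + k) (y + k)) (n + 1)
  simp only [sum_congr rfl (fun k _ => step k), sum_sub_distrib, jensenGap_logGammaSeq_add_one]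
  push_cast at telescope ⊢
  simp only [add_zero, sum_sub_distrib] at telescope
  linarith

lemma tendsto_add_nat_add_mul_log_sub_log (c : ℝ) {a b : ℝ} (ha : 0 < a) (hb : 0 < b) :
    Tendsto (fun n : ℕ => (a + n + c) * (log (a + n) - log (b + n))) atTop (𝓝 (a - b)) := by
  have hbn : Tendsto (fun n : ℕ => b + (n : ℝ)) atTop atTop :=
    tendsto_atTop_add_const_left _ b tendsto_natCast_atTop_atTop
  have hlog : Tendsto (fun n : ℕ => (b + n) * log (1 + (a - b) / (b + n))) atTop (𝓝 (a - b)) :=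
    (tendsto_mul_log_one_add_div_atTop (a - b)).comp hbn
  have hratio : Tendsto (fun n : ℕ => 1 + (a - b + c) / (b + n)) atTop (𝓝 1) := by
    simpa using tendsto_const_nhds.add (tendsto_const_nhds.div_atTop hbn)
  refine (one_mul (a - b) ▸ hratio.mul hlog).congr fun n => ?_
  have hbn : (0 : ℝ) < b + n := by positivity
  have han : (0 : ℝ) < a + n := by positivity
  rw [show 1 + (a - b) / (b + n) = (a + n) / (b + n) by field_simp; ring,
    log_div han.ne' hbn.ne']
  field_simp
  ring

lemma tendsto_jensenGap_add_mul_log_add_nat (c : ℝ) {x y : ℝ} (hx : 0 < x) (hy : 0 < y) :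
    Tendsto (fun n : ℕ => jensenGap (fun t => (t + c) * log t) (x + n) (y + n)) atTop
      (𝓝 0) := by
  have hm : 0 < (x + y) / 2 := by positivity
  have h := (tendsto_add_nat_add_mul_log_sub_log c hx hm).add
    (tendsto_add_nat_add_mul_log_sub_log c hy hm)
  rw [show x - (x + y) / 2 + (y - (x + y) / 2) = 0 by ring] at h
  refine h.congr fun n => ?_
  rw [jensenGap_add_add]
  ring

lemma tendsto_jensenGap_logGammaSeq_add_one {x y : ℝ} (hx : -1 < x) (hy : -1 < y) :
    Tendsto (fun n => jensenGap (fun t => BohrMollerup.logGammaSeq (t + 1) n) x y) atTop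
      (𝓝 (jensenGap (fun t => log (Gamma (t + 1))) x y)) :=
  ((BohrMollerup.tendsto_log_gamma (by linarith)).add
    (BohrMollerup.tendsto_log_gamma (by linarith))).sub
    ((BohrMollerup.tendsto_log_gamma (by linarith)).const_mul 2)

lemma tendsto_sub_jensenGap_add_nat_succ {F : ℝ → ℝ} {x y : ℝ}
    (hF : Tendsto (fun n : ℕ => jensenGap F (x + n) (y + n)) atTop (𝓝 0)) :
    Tendsto (fun n : ℕ => jensenGap F x y - jensenGap F (x + (n + 1 : ℕ)) (y + (n + 1 : ℕ)))
      atTop (𝓝 (jensenGap F x y)) := by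
  simpa using tendsto_const_nhds.sub (hF.comp (tendsto_add_atTop_nat 1))

lemma jensenGap_log_Gamma_add_one_le {F : ℝ → ℝ} {x y : ℝ} (hx : 0 < x) (hy : 0 < y)
    (hF : Tendsto (fun n : ℕ => jensenGap F (x + n) (y + n)) atTop (𝓝 0))
    (hg : ConcaveOn ℝ (Ioi 0) (fun t => F (t + 1) - F t - log (t + 1))) :
    jensenGap (fun t => log (Gamma (t + 1))) x y ≤ jensenGap F x y := by
  refine le_of_tendsto_of_tendsto' (tendsto_jensenGap_logGammaSeq_add_one (by linarith)
    (by linarith)) (tendsto_sub_jensenGap_add_nat_succ hF) fun n => ?_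
  have hsum : ∑ k ∈ range (n + 1),
      jensenGap (fun t => F (t + 1) - F t - log (t + 1)) (x + k) (y + k) ≤ 0 :=
    sum_nonpos fun k _ => hg.jensenGap_nonpos (mem_Ioi.mpr (by positivity))
      (mem_Ioi.mpr (by positivity))
  rw [jensenGap_logGammaSeq_add_one_eq F]
  linarith

lemma le_jensenGap_log_Gamma_add_one {F : ℝ → ℝ} {x y : ℝ} (hx : 0 < x) (hy : 0 < y)
    (hF : Tendsto (fun n : ℕ => jensenGap F (x + n) (y + n)) atTop (𝓝 0))
    (hg : ConvexOn ℝ (Ioi 0) (fun t => F (t + 1) - F t - log (t + 1))) :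
    jensenGap F x y ≤ jensenGap (fun t => log (Gamma (t + 1))) x y := by
  refine le_of_tendsto_of_tendsto' (tendsto_sub_jensenGap_add_nat_succ hF)
    (tendsto_jensenGap_logGammaSeq_add_one (by linarith) (by linarith)) fun n => ?_
  have hsum : 0 ≤ ∑ k ∈ range (n + 1),
      jensenGap (fun t => F (t + 1) - F t - log (t + 1)) (x + k) (y + k) :=
    sum_nonneg fun k _ => hg.jensenGap_nonneg (mem_Ioi.mpr (by positivity))
      (mem_Ioi.mpr (by positivity))
  rw [jensenGap_logGammaSeq_add_one_eq F]
  linarith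

lemma jensenGap_log_Gamma_add_one_le_add_mul_log {c x y : ℝ} (hc : c ≤ 0) (hx : 0 < x)
    (hy : 0 < y) :
    jensenGap (fun t => log (Gamma (t + 1))) x y ≤ jensenGap (fun t => (t + c) * log t) x y :=
  jensenGap_log_Gamma_add_one_le hx hy (tendsto_jensenGap_add_mul_log_add_nat c hx hy) <| by
    convert concaveOn_add_mul_log_add_one_sub_log hc using 2 with t
    ring

lemma jensenGap_add_mul_log_le_log_Gamma_add_one {c x y : ℝ} (hc : 1 / 2 ≤ c) (hx : 0 < x)
    (hy : 0 < y) :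
    jensenGap (fun t => (t + c) * log t) x y ≤ jensenGap (fun t => log (Gamma (t + 1))) x y :=
  le_jensenGap_log_Gamma_add_one hx hy (tendsto_jensenGap_add_mul_log_add_nat c hx hy) <| by
    convert convexOn_add_mul_log_add_one_sub_log hc using 2 with t
    ring

lemma exp_neg_jensenGap_log {f : ℝ → ℝ} {x y : ℝ} (hx : 0 < f x) (hy : 0 < f y)
    (hm : 0 < f ((x + y) / 2)) :
    exp (-jensenGap (fun t => log (f t)) x y) = f ((x + y) / 2) ^ 2 / (f x * f y) := by
  rw [jensenGap, neg_sub, exp_sub, exp_add, exp_log hx, exp_log hy, two_mul, exp_add, exp_log hm,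
    sq]

lemma exp_neg_jensenGap_add_mul_log (c : ℝ) {x y : ℝ} (hx : 0 < x) (hy : 0 < y) :
    exp (-jensenGap (fun t => (t + c) * log t) x y) =
      ((x + y) / 2) ^ (x + y + 2 * c) / (x ^ (x + c) * y ^ (y + c)) := by
  rw [rpow_def_of_pos (by positivity), rpow_def_of_pos hx, rpow_def_of_pos hy, ← exp_add,
    ← exp_sub, jensenGap]
  ring_nf

/-- Gurland-ratio bounds: for `x, y > 0`,
`((x+y)/2)^(x+y)/(x^x y^y) ≤ Γ((x+y+2)/2)²/(Γ(x+1)Γ(y+1)) ≤ ((x+y)/2)^(x+y+1)/(x^(x+1/2) y^(y+1/2))`. -/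
theorem gurland_ratio_bounds (x y : ℝ) (hx : 0 < x) (hy : 0 < y) :
    ((x + y) / 2) ^ (x + y) / (x ^ x * y ^ y)
        ≤ (Real.Gamma ((x + y + 2) / 2)) ^ 2 / (Real.Gamma (x + 1) * Real.Gamma (y + 1)) ∧
    (Real.Gamma ((x + y + 2) / 2)) ^ 2 / (Real.Gamma (x + 1) * Real.Gamma (y + 1))
        ≤ ((x + y) / 2) ^ (x + y + 1) / (x ^ (x + 1 / 2) * y ^ (y + 1 / 2)) := by
  have hGamma : Gamma ((x + y + 2) / 2) ^ 2 / (Gamma (x + 1) * Gamma (y + 1)) =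
      exp (-jensenGap (fun t => log (Gamma (t + 1))) x y) := by
    rw [exp_neg_jensenGap_log (f := fun t => Gamma (t + 1)) (Gamma_pos_of_pos (by linarith))
      (Gamma_pos_of_pos (by linarith)) (Gamma_pos_of_pos (by positivity))]
    ring_nf
  rw [hGamma]
  constructor
  · calc ((x + y) / 2) ^ (x + y) / (x ^ x * y ^ y)
        = exp (-jensenGap (fun t => (t + 0) * log t) x y) := by
          rw [exp_neg_jensenGap_add_mul_log 0 hx hy]; simp
      _ ≤ _ :=
          exp_le_exp.mpr (neg_le_neg (jensenGap_log_Gamma_add_one_le_add_mul_log le_rfl hx hy))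
  · calc exp (-jensenGap (fun t => log (Gamma (t + 1))) x y)
        ≤ exp (-jensenGap (fun t => (t + 1 / 2) * log t) x y) :=
          exp_le_exp.mpr (neg_le_neg (jensenGap_add_mul_log_le_log_Gamma_add_one le_rfl hx hy))
      _ = _ := by rw [exp_neg_jensenGap_add_mul_log _ hx hy]; norm_num
end
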